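/- arXiv:1704.02728 — 3 statements merged into one kernel-verified Lean document; each statement's English description precedes it below -/
import Mathlib

section
/- Assume k and p are symmetric dispersal kernels, m, M ∈ C(Ω̄) are nonconstant, d, D, b, c > 0, and assume positive semi-trivial profiles u_d and v_D exist. Let (u,v) be a bounded classical solution of the competition system with u(x,0) > 0 and v(x,0) > 0 for all x ∈ Ω̄. (i) If u(·,t) does not converge weakly to 0 in L²(Ω) as t → ∞ (i.e., there is g ∈ L²(Ω) such that ∫_Ω u(x,t) g(x) dx does not tend to 0), then there exists T₁ > 0 such that v(x,t) < v_D(x) for all x ∈ Ω̄ and t ≥ T₁. (ii) If v(·,t) does not converge weakly to 0 in L²(Ω) as t → ∞, then there exists T₂ > 0 such that u(x,t) < u_d(x) for all x ∈ Ω̄ and t ≥ T₂. -/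
/-!
Part (ii) is part (i) with the two species exchanged. For (i), `u` is a supersolution of the linear
equation `∂ₜu ≥ d ∫_Ω k(·,y) u(y) dy - L u`, so it stays positive, and because `k > 0` near the
diagonal and `Ω` is connected, finitely many applications of the kernel spread mass over all of
`Ω̄`: `u(·, τ + N + s) ≥ κ ∫_Ω u(·, τ)` for `s ∈ [0, 1]`. If `u(·, t)` does not tend weakly to `0`,
its mass is `≥ δ` at arbitrarily late times, so `b u ≥ μ > 0` on unit time windows arbitrarily
late. A multiple `β(t) v_D` is a strict supersolution of the `v`-equation when
`β' + β (β - 1) v_D + b u β > 0`. Comparing `v` successively with the barriers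
`1 + γ e^{-v_min t}` (decaying towards `1`), a linear descent from `1 + γ` to `1` inside such a
window, and `1 - γ e^{-(max v_D) t}` afterwards gives `v < v_D` from then on.
-/

open MeasureTheory Topology Filter

noncomputable section

abbrev Pt (n : ℕ) := EuclideanSpace ℝ (Fin n)

def IsBoundedDomain {n : ℕ} (Ω : Set (Pt n)) : Prop :=
  IsOpen Ω ∧ IsConnected Ω ∧ Bornology.IsBounded Ω

def IsDispersalKernel {n : ℕ} (k : Pt n → Pt n → ℝ) : Prop :=
  Continuous (Function.uncurry k) ∧ (∀ x y, 0 ≤ k x y) ∧ (∀ x, 0 < k x x) ∧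
  (∀ x, (∫ y, k x y) = 1) ∧ (∀ x, (∫ y, k y x) = 1)

def SymmKernel {n : ℕ} (k : Pt n → Pt n → ℝ) : Prop := ∀ x y, k x y = k y x

def nlOp {n : ℕ} (Ω : Set (Pt n)) (k : Pt n → Pt n → ℝ) (φ : Pt n → ℝ) (x : Pt n) : ℝ :=
  (∫ y in Ω, k x y * φ y) - (∫ y in Ω, k y x) * φ x

def Nonconstant {n : ℕ} (Ω : Set (Pt n)) (m : Pt n → ℝ) : Prop :=
  ¬ ∃ a : ℝ, ∀ x ∈ closure Ω, m x = a

def SemiTrivialProfile {n : ℕ} (Ω : Set (Pt n)) (k : Pt n → Pt n → ℝ) (d : ℝ)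
    (m u : Pt n → ℝ) : Prop :=
  ContinuousOn u (closure Ω) ∧ (∀ x ∈ closure Ω, 0 < u x) ∧
  ∀ x ∈ closure Ω, d * nlOp Ω k u x + u x * (m x - u x) = 0

def stabIdx {n : ℕ} (Ω : Set (Pt n)) (p : Pt n → Pt n → ℝ) (D : ℝ) (q : Pt n → ℝ) : ℝ :=
  sSup {r : ℝ | ∃ ψ : Pt n → ℝ, MemLp ψ 2 (volume.restrict Ω) ∧
    ¬ ψ =ᵐ[volume.restrict Ω] (fun _ => (0:ℝ)) ∧
    r = (∫ x in Ω, (D * ψ x * nlOp Ω p ψ x + q x * ψ x ^ 2)) / (∫ x in Ω, ψ x ^ 2)}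

def IsSteadyState {n : ℕ} (Ω : Set (Pt n)) (k p : Pt n → Pt n → ℝ)
    (d D b c : ℝ) (m M u v : Pt n → ℝ) : Prop :=
  ContinuousOn u (closure Ω) ∧ ContinuousOn v (closure Ω) ∧
  (∀ x ∈ closure Ω, d * nlOp Ω k u x + u x * (m x - u x - c * v x) = 0) ∧
  (∀ x ∈ closure Ω, D * nlOp Ω p v x + v x * (M x - b * u x - v x) = 0)

def IsPositiveSteadyState {n : ℕ} (Ω : Set (Pt n)) (k p : Pt n → Pt n → ℝ)
    (d D b c : ℝ) (m M u v : Pt n → ℝ) : Prop :=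
  IsSteadyState Ω k p d D b c m M u v ∧
  (∀ x ∈ closure Ω, 0 < u x) ∧ (∀ x ∈ closure Ω, 0 < v x)

def IsBoundedClassicalSolution {n : ℕ} (Ω : Set (Pt n)) (k p : Pt n → Pt n → ℝ)
    (d D b c : ℝ) (m M : Pt n → ℝ) (u v : Pt n → ℝ → ℝ) : Prop :=
  ContinuousOn (fun q : Pt n × ℝ => u q.1 q.2) (closure Ω ×ˢ Set.Ici 0) ∧
  ContinuousOn (fun q : Pt n × ℝ => v q.1 q.2) (closure Ω ×ˢ Set.Ici 0) ∧
  (∃ C : ℝ, ∀ x ∈ closure Ω, ∀ t ≥ (0:ℝ), |u x t| ≤ C ∧ |v x t| ≤ C) ∧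
  (∀ x ∈ closure Ω, ∀ t ≥ (0:ℝ), DifferentiableWithinAt ℝ (u x) (Set.Ici 0) t ∧
      DifferentiableWithinAt ℝ (v x) (Set.Ici 0) t) ∧
  (∀ x ∈ closure Ω, ∀ t > (0:ℝ),
      HasDerivAt (u x)
        (d * nlOp Ω k (fun y => u y t) x + u x t * (m x - u x t - c * v x t)) t ∧
      HasDerivAt (v x)
        (D * nlOp Ω p (fun y => v y t) x + v x t * (M x - b * u x t - v x t)) t)

open Set Metric Real

lemma add_mul_le_exp_mul_of_hasDerivAt {f f' : ℝ → ℝ} {a b c L : ℝ} (hab : a ≤ b) (hL : 0 ≤ L)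
    (hc : 0 ≤ c) (hf : ContinuousOn f (Icc a b)) (hf' : ∀ s ∈ Ioo a b, HasDerivAt f (f' s) s)
    (hbound : ∀ s ∈ Ioo a b, c - L * f s ≤ f' s) :
    f a + c * (b - a) ≤ exp (L * (b - a)) * f b := by
  have hmono : MonotoneOn (fun s => exp (L * (s - a)) * f s - c * (s - a)) (Icc a b) := by
    refine monotoneOn_of_hasDerivWithinAt_nonneg (convex_Icc a b) (by fun_prop)
      (f' := fun s => exp (L * (s - a)) * (L * f s + f' s) - c) (fun s hs => ?_) (fun s hs => ?_)
    all_goals rw [interior_Icc] at hs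
    · have he : HasDerivAt (fun s => exp (L * (s - a))) (exp (L * (s - a)) * L) s := by
        simpa using ((hasDerivAt_id s).sub_const a).const_mul L |>.exp
      have hd : HasDerivAt (fun s => exp (L * (s - a)) * f s - c * (s - a))
          (exp (L * (s - a)) * L * f s + exp (L * (s - a)) * f' s - c * 1) s :=
        (he.mul (hf' s hs)).sub (((hasDerivAt_id s).sub_const a).const_mul c)
      exact (hd.congr_deriv (by ring)).hasDerivWithinAt
    · have h₁ : 1 ≤ exp (L * (s - a)) := one_le_exp (mul_nonneg hL (by linarith [hs.1]))
      nlinarith [hbound s hs]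
  have h := hmono (left_mem_Icc.2 hab) (right_mem_Icc.2 hab) hab
  simp only [sub_self, mul_zero, exp_zero, one_mul] at h
  linarith

lemma le_exp_mul_of_hasDerivAt {f f' : ℝ → ℝ} {a b L : ℝ} (hab : a ≤ b) (hL : 0 ≤ L)
    (hf : ContinuousOn f (Icc a b)) (hf' : ∀ s ∈ Ioo a b, HasDerivAt f (f' s) s)
    (hbound : ∀ s ∈ Ioo a b, -(L * f s) ≤ f' s) :
    f a ≤ exp (L * (b - a)) * f b := by
  simpa using add_mul_le_exp_mul_of_hasDerivAt hab hL le_rfl hf hf' (by simpa using hbound)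

lemma HasDerivAt.nonpos_of_pos_left {f : ℝ → ℝ} {f' a t : ℝ} (hf : HasDerivAt f f' t)
    (hat : a < t) (hpos : ∀ s ∈ Ioo a t, 0 < f s) (hzero : f t = 0) : f' ≤ 0 := by
  have hslope := hasDerivWithinAt_iff_tendsto_slope.1 (hf.hasDerivWithinAt (s := Iio t))
  rw [sdiff_singleton_eq_self self_notMem_Iio] at hslope
  refine le_of_tendsto hslope ?_
  filter_upwards [Ioo_mem_nhdsLT hat] with s hs
  rw [slope_def_field, hzero, sub_zero]
  exact div_nonpos_of_nonneg_of_nonpos (hpos s hs).le (by linarith [hs.2])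

lemma ContinuousWithinAt.nonneg_of_pos_left {f : ℝ → ℝ} {a t : ℝ}
    (hf : ContinuousWithinAt f (Ico a t) t) (hat : a < t) (hpos : ∀ s ∈ Ico a t, 0 < f s) :
    0 ≤ f t := by
  have : (𝓝[Ico a t] t).NeBot := by
    rw [← mem_closure_iff_nhdsWithin_neBot, closure_Ico hat.ne]
    exact right_mem_Icc.2 hat.le
  exact ge_of_tendsto hf (eventually_nhdsWithin_of_forall fun s hs => (hpos s hs).le)

lemma IsCompact.exists_first_zero {X : Type*} [TopologicalSpace X] [T2Space X] {K : Set X}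
    (hK : IsCompact K) {F : X → ℝ → ℝ} {a b : ℝ}
    (hF : ContinuousOn (fun q : X × ℝ => F q.1 q.2) (K ×ˢ Icc a b))
    (ha : ∀ x ∈ K, 0 < F x a) {x₀ : X} (hx₀ : x₀ ∈ K) {t₀ : ℝ} (ht₀ : t₀ ∈ Icc a b)
    (hneg : F x₀ t₀ ≤ 0) :
    ∃ t ∈ Ioc a b, (∀ s ∈ Ico a t, ∀ x ∈ K, 0 < F x s) ∧ (∀ x ∈ K, 0 ≤ F x t) ∧
      ∃ x ∈ K, F x t = 0 := by
  set S := K ×ˢ Icc a b ∩ (fun q : X × ℝ => F q.1 q.2) ⁻¹' Iic 0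
  have hS : IsCompact S := (hK.prod isCompact_Icc).of_isClosed_subset
    (hF.preimage_isClosed_of_isClosed (hK.prod isCompact_Icc).isClosed isClosed_Iic)
    inter_subset_left
  obtain ⟨⟨x₁, t₁⟩, ⟨⟨hx₁, ht₁⟩, hF₁⟩, hmin⟩ :=
    hS.exists_isMinOn ⟨(x₀, t₀), ⟨hx₀, ht₀⟩, hneg⟩ continuous_snd.continuousOn
  have hbefore : ∀ s ∈ Ico a t₁, ∀ x ∈ K, 0 < F x s := fun s hs x hx => by
    by_contra! h
    exact (show t₁ ≤ s from hmin (a := (x, s)) ⟨⟨hx, hs.1, hs.2.le.trans ht₁.2⟩, h⟩).not_gt hs.2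
  have hat₁ : a < t₁ := ht₁.1.lt_of_ne fun h => by
    subst h
    exact (ha x₁ hx₁).not_ge hF₁
  have hat : ∀ x ∈ K, 0 ≤ F x t₁ := fun x hx =>
    ContinuousWithinAt.nonneg_of_pos_left
      ((hF (x, t₁) ⟨hx, ht₁⟩).comp (continuous_const.prodMk continuous_id).continuousWithinAt
        fun s hs => ⟨hx, hs.1, hs.2.le.trans ht₁.2⟩)
      hat₁ fun s hs => hbefore s hs x hx
  exact ⟨t₁, ⟨hat₁, ht₁.2⟩, hbefore, hat, x₁, hx₁, le_antisymm hF₁ (hat x₁ hx₁)⟩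

lemma IsCompact.exists_pos_le_of_dist_lt {X : Type*} [MetricSpace X] {k : X → X → ℝ}
    {K : Set X} (hK : IsCompact K) (hk : Continuous (Function.uncurry k))
    (hdiag : ∀ x ∈ K, 0 < k x x) :
    ∃ r > 0, ∃ k₀ > 0, ∀ x ∈ K, ∀ y ∈ K, dist x y < r → k₀ ≤ k x y := by
  obtain ⟨m, hm, hmle⟩ :=
    hK.exists_forall_le' (hk.comp (continuous_id.prodMk continuous_id)).continuousOn hdiag
  obtain ⟨r, hr, hclose⟩ := Metric.uniformContinuousOn_iff.1
    ((hK.prod hK).uniformContinuousOn_of_continuous hk.continuousOn) (m / 2) (half_pos hm)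
  refine ⟨r, hr, m / 2, half_pos hm, fun x hx y hy hxy => ?_⟩
  have h := hclose (x, y) ⟨hx, hy⟩ (y, y) ⟨hy, hy⟩ (by simpa [Prod.dist_eq, hr] using hxy)
  have hy' := hmle y hy
  simp only [Function.uncurry_apply_pair, Function.comp_apply, id, Real.dist_eq] at h hy'
  linarith [(abs_lt.1 h).1]

lemma IsCompact.exists_pos_le_measureReal_ball_inter {X : Type*} [MetricSpace X]
    [ProperSpace X] [MeasureSpace X] [IsFiniteMeasureOnCompacts (volume : Measure X)]
    [(volume : Measure X).IsOpenPosMeasure] {K G : Set X} (hK : IsCompact K) (hG : IsOpen G)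
    {ρ : ℝ} (hρ : 0 < ρ) :
    ∃ ω > 0, ∀ x ∈ K ∩ thickening ρ G, ω ≤ volume.real (ball x (2 * ρ) ∩ G) := by
  obtain ⟨W, -, hW⟩ := hK.elim_nhds_subcover (fun w => ball w (ρ / 2))
    fun w _ => ball_mem_nhds w (half_pos hρ)
  have hsmall : ∀ᶠ ω in 𝓝[>] (0 : ℝ), ∀ w ∈ W,
      0 < volume.real (ball w (3 * ρ / 2) ∩ G) → ω ≤ volume.real (ball w (3 * ρ / 2) ∩ G) :=
    (eventually_all_finset W).2 fun w _ =>
      eventually_imp_distrib_left.2 fun h => nhdsWithin_le_nhds (eventually_le_nhds h)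
  obtain ⟨ω, hω, hωpos⟩ := (hsmall.and self_mem_nhdsWithin).exists
  refine ⟨ω, hωpos, fun x ⟨hxK, hxG⟩ => ?_⟩
  obtain ⟨y, hyG, hxy⟩ := mem_thickening_iff.1 hxG
  obtain ⟨w, hwW, hxw⟩ := mem_iUnion₂.1 (hW hxK)
  rw [mem_ball] at hxw
  have hsub : ball w (3 * ρ / 2) ∩ G ⊆ ball x (2 * ρ) ∩ G := fun q ⟨hq, hqG⟩ =>
    ⟨by rw [mem_ball] at hq ⊢; linarith [dist_triangle q w x, dist_comm w x], hqG⟩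
  have hy : y ∈ ball w (3 * ρ / 2) ∩ G :=
    ⟨by rw [mem_ball]; linarith [dist_triangle y x w, dist_comm x y], hyG⟩
  have hpos : 0 < volume.real (ball w (3 * ρ / 2) ∩ G) :=
    ENNReal.toReal_pos ((isOpen_ball.inter hG).measure_pos volume ⟨y, hy⟩).ne'
      (measure_inter_ne_top_of_left_ne_top measure_ball_lt_top.ne)
  exact (hω w hwW hpos).trans
    (measureReal_mono hsub (measure_inter_ne_top_of_left_ne_top measure_ball_lt_top.ne))

lemma integral_le_sum_setIntegral_of_subset_biUnion {α ι : Type*} [MeasurableSpace α]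
    {μ : Measure α} {s : Set α} {f : α → ℝ} (hs : MeasurableSet s) (hf : IntegrableOn f s μ)
    (hf0 : ∀ y ∈ s, 0 ≤ f y) (W : Finset ι) {t : ι → Set α} (ht : ∀ i, MeasurableSet (t i))
    (hcover : s ⊆ ⋃ i ∈ W, t i) :
    ∫ y in s, f y ∂μ ≤ ∑ i ∈ W, ∫ y in s ∩ t i, f y ∂μ := by
  simp_rw [← setIntegral_indicator (ht _)]
  rw [← integral_finsetSum _ fun i _ => hf.indicator (ht i)]
  refine setIntegral_mono_on hf (integrable_finsetSum _ fun i _ => hf.indicator (ht i)) hs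
    fun y hy => ?_
  obtain ⟨i, hi, hyi⟩ := mem_iUnion₂.1 (hcover hy)
  rw [← indicator_of_mem hyi f]
  exact Finset.single_le_sum (f := fun i => (t i).indicator f y)
    (fun j _ => indicator_nonneg (fun _ _ => hf0 y hy) y) hi

section WeakConvergence

variable {α : Type*} [MeasurableSpace α] {μ : Measure α} {g : α → ℝ}

lemma tendsto_integral_max_abs_sub (hg : Integrable g μ) :
    Tendsto (fun R : ℕ => ∫ y, max (|g y| - R) 0 ∂μ) atTop (𝓝 0) := by
  have hg' := hg.aestronglyMeasurable
  have hlim := tendsto_integral_of_dominated_convergence (μ := μ) (f := fun _ => (0 : ℝ))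
    (F := fun (R : ℕ) y => max (|g y| - R) 0) (fun y => |g y|) (fun R => by fun_prop) hg.abs
    (fun R => Eventually.of_forall fun y => by
      rw [Real.norm_eq_abs, abs_of_nonneg (le_max_right _ _)]
      exact max_le (by linarith [R.cast_nonneg (α := ℝ)]) (abs_nonneg _))
    (Eventually.of_forall fun y => tendsto_atTop_of_eventually_const (i₀ := ⌈|g y|⌉₊)
      fun R hR => max_eq_right (by linarith [(Nat.le_ceil |g y|).trans (Nat.cast_le.2 hR)]))
  simpa using hlim

lemma tendsto_integral_mul_of_tendsto_integral [IsFiniteMeasure μ] {ι : Type*} {l : Filter ι}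
    {f : ι → α → ℝ} {C : ℝ} (hg : Integrable g μ)
    (hf : ∀ᶠ i in l, AEStronglyMeasurable (f i) μ ∧ ∀ᵐ y ∂μ, 0 ≤ f i y ∧ f i y ≤ C)
    (hlim : Tendsto (fun i => ∫ y, f i y ∂μ) l (𝓝 0)) :
    Tendsto (fun i => ∫ y, f i y * g y ∂μ) l (𝓝 0) := by
  rw [Metric.tendsto_nhds]
  intro ε hε
  obtain ⟨R, hR⟩ := (((tendsto_integral_max_abs_sub hg).const_mul C).eventually
    (gt_mem_nhds (show C * 0 < ε / 2 by linarith))).exists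
  have htail : Integrable (fun y => max (|g y| - R) 0) μ :=
    (hg.abs.sub (integrable_const _)).sup (integrable_const 0)
  filter_upwards [hf, Metric.tendsto_nhds.1 hlim (ε / 2 / (R + 1)) (by positivity)]
    with i ⟨hmeas, hbd⟩ hsmall
  rw [Real.dist_eq, sub_zero] at hsmall ⊢
  have hfint : Integrable (f i) μ := Integrable.of_bound hmeas C
    (hbd.mono fun y hy => by rw [Real.norm_eq_abs, abs_of_nonneg hy.1]; exact hy.2)
  have hR0 : (0 : ℝ) ≤ R := R.cast_nonneg
  have hmass : R * ∫ y, f i y ∂μ ≤ ε / 2 :=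
    calc R * ∫ y, f i y ∂μ ≤ R * (ε / 2 / (R + 1)) :=
          mul_le_mul_of_nonneg_left ((le_abs_self _).trans hsmall.le) hR0
      _ ≤ ε / 2 := by rw [mul_div_assoc', div_le_iff₀ (by positivity)]; nlinarith
  calc |∫ y, f i y * g y ∂μ| ≤ ∫ y, |f i y * g y| ∂μ := abs_integral_le_integral_abs
    _ ≤ ∫ y, (R * f i y + C * max (|g y| - R) 0) ∂μ := by
        refine integral_mono_of_nonneg (Eventually.of_forall fun y => abs_nonneg _)
          ((hfint.const_mul _).add (htail.const_mul _)) (hbd.mono fun y ⟨h0, hC⟩ => ?_)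
        dsimp only
        rw [abs_mul, abs_of_nonneg h0]
        nlinarith [le_max_left (|g y| - R) 0, le_max_right (|g y| - R) 0]
    _ = R * ∫ y, f i y ∂μ + C * ∫ y, max (|g y| - R) 0 ∂μ := by
        rw [integral_add (hfint.const_mul _) (htail.const_mul _), integral_const_mul,
          integral_const_mul]
    _ < ε := by linarith

end WeakConvergence

section KernelOperator

variable {X : Type*} [MeasureSpace X] {Ω : Set X} {k : X → X → ℝ}

def kernelIntegral (Ω : Set X) (k : X → X → ℝ) (φ : X → ℝ) (x : X) : ℝ :=
  ∫ y in Ω, k x y * φ y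

lemma kernelIntegral_nonneg (hΩm : MeasurableSet Ω) (hk0 : ∀ x y, 0 ≤ k x y) {φ : X → ℝ}
    (hφ : ∀ y ∈ Ω, 0 ≤ φ y) (x : X) : 0 ≤ kernelIntegral Ω k φ x :=
  setIntegral_nonneg hΩm fun y hy => mul_nonneg (hk0 x y) (hφ y hy)

lemma kernelIntegral_const_mul (c : ℝ) (φ : X → ℝ) (x : X) :
    kernelIntegral Ω k (fun y => c * φ y) x = c * kernelIntegral Ω k φ x := by
  simp only [kernelIntegral, ← integral_const_mul, mul_left_comm]

lemma iterate_kernelIntegral_nonneg (hΩm : MeasurableSet Ω) (hk0 : ∀ x y, 0 ≤ k x y)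
    {φ : X → ℝ} (hφ : ∀ y ∈ Ω, 0 ≤ φ y) (N : ℕ) :
    ∀ y ∈ Ω, 0 ≤ (kernelIntegral Ω k)^[N] φ y := by
  induction N with
  | zero => exact hφ
  | succ N ih =>
    rw [Function.iterate_succ']
    exact fun y _ => kernelIntegral_nonneg hΩm hk0 ih y

variable [MetricSpace X] [ProperSpace X] [BorelSpace X]
  [IsFiniteMeasureOnCompacts (volume : Measure X)]

lemma integrableOn_kernel_mul (hΩb : Bornology.IsBounded Ω)
    (hk : Continuous (Function.uncurry k)) {φ : X → ℝ} (hφ : ContinuousOn φ (closure Ω))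
    (x : X) : IntegrableOn (fun y => k x y * φ y) Ω :=
  (((hk.comp (Continuous.prodMk_right x)).continuousOn.mul hφ).integrableOn_compact
    hΩb.isCompact_closure).mono_set subset_closure

lemma continuous_kernelIntegral (hΩm : MeasurableSet Ω) (hΩb : Bornology.IsBounded Ω)
    (hk : Continuous (Function.uncurry k)) {φ : X → ℝ} (hφ : ContinuousOn φ (closure Ω)) :
    Continuous (kernelIntegral Ω k φ) := by
  have : IsFiniteMeasure (volume.restrict Ω) := isFiniteMeasure_restrict.2 hΩb.measure_lt_top.ne
  obtain ⟨C, hC⟩ := hΩb.isCompact_closure.exists_bound_of_continuousOn hφ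
  refine continuous_iff_continuousAt.2 fun x₀ => ?_
  obtain ⟨B, hB⟩ := ((isCompact_closedBall x₀ 1).prod
    hΩb.isCompact_closure).exists_bound_of_continuousOn hk.continuousOn
  refine continuousAt_of_dominated (bound := fun _ => B * C)
    (Eventually.of_forall fun x => (integrableOn_kernel_mul hΩb hk hφ x).aestronglyMeasurable)
    ?_ (integrable_const _) (Eventually.of_forall fun y =>
      ((hk.comp (Continuous.prodMk_left y)).mul continuous_const).continuousAt)
  filter_upwards [closedBall_mem_nhds x₀ one_pos] with x hx
  filter_upwards [ae_restrict_mem hΩm] with y hy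
  rw [norm_mul]
  exact mul_le_mul (hB (x, y) ⟨hx, subset_closure hy⟩) (hC y (subset_closure hy)) (norm_nonneg _)
    ((norm_nonneg _).trans (hB (x, y) ⟨hx, subset_closure hy⟩))

lemma continuousOn_iterate_kernelIntegral (hΩm : MeasurableSet Ω) (hΩb : Bornology.IsBounded Ω)
    (hk : Continuous (Function.uncurry k)) {φ : X → ℝ} (hφ : ContinuousOn φ (closure Ω))
    (N : ℕ) : ContinuousOn ((kernelIntegral Ω k)^[N] φ) (closure Ω) := by
  induction N with
  | zero => exact hφ
  | succ N ih =>
    rw [Function.iterate_succ_apply']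
    exact (continuous_kernelIntegral hΩm hΩb hk ih).continuousOn

lemma kernelIntegral_mono (hΩm : MeasurableSet Ω) (hΩb : Bornology.IsBounded Ω)
    (hk : Continuous (Function.uncurry k)) (hk0 : ∀ x y, 0 ≤ k x y) {φ ψ : X → ℝ}
    (hφ : ContinuousOn φ (closure Ω)) (hψ : ContinuousOn ψ (closure Ω))
    (hle : ∀ y ∈ Ω, φ y ≤ ψ y) (x : X) : kernelIntegral Ω k φ x ≤ kernelIntegral Ω k ψ x :=
  setIntegral_mono_on (integrableOn_kernel_mul hΩb hk hφ x) (integrableOn_kernel_mul hΩb hk hψ x)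
    hΩm fun y hy => mul_le_mul_of_nonneg_left (hle y hy) (hk0 x y)

lemma setIntegral_kernel_mul_le (hΩm : MeasurableSet Ω) (hΩb : Bornology.IsBounded Ω)
    (hk : Continuous (Function.uncurry k)) (hk0 : ∀ x y, 0 ≤ k x y) {φ : X → ℝ}
    (hφ : ContinuousOn φ (closure Ω)) (hφ0 : ∀ y ∈ Ω, 0 ≤ φ y) {A : Set X} (hAΩ : A ⊆ Ω)
    (x : X) : ∫ y in A, k x y * φ y ≤ kernelIntegral Ω k φ x :=
  setIntegral_mono_set (integrableOn_kernel_mul hΩb hk hφ x)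
    ((ae_restrict_iff' hΩm).2 (Eventually.of_forall fun y hy => mul_nonneg (hk0 x y) (hφ0 y hy)))
    (Eventually.of_forall hAΩ)

end KernelOperator

section Irreducibility

variable {X : Type*} [MetricSpace X] {Ω : Set X}

def chainSet (Ω : Set X) (ρ : ℝ) (z : X) : ℕ → Set X
  | 0 => ball z ρ ∩ Ω
  | i + 1 => thickening ρ (chainSet Ω ρ z i) ∩ Ω

lemma isOpen_chainSet (hΩ : IsOpen Ω) (ρ : ℝ) (z : X) (i : ℕ) : IsOpen (chainSet Ω ρ z i) := by
  cases i with
  | zero => exact isOpen_ball.inter hΩ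
  | succ i => exact isOpen_thickening.inter hΩ

lemma chainSet_subset (ρ : ℝ) (z : X) (i : ℕ) : chainSet Ω ρ z i ⊆ Ω := by
  cases i <;> exact inter_subset_right

lemma monotone_thickening_chainSet {ρ : ℝ} (hρ : 0 < ρ) (z : X) :
    Monotone fun i => thickening ρ (chainSet Ω ρ z i) :=
  monotone_nat_of_le_succ fun i => thickening_subset_of_subset ρ
    (subset_inter (self_subset_thickening hρ _) (chainSet_subset ρ z i))

lemma exists_closure_subset_thickening_chainSet (hΩ : IsOpen Ω) (hconn : IsPreconnected Ω)
    (hK : IsCompact (closure Ω)) {ρ : ℝ} (hρ : 0 < ρ) {z : X} (hz : z ∈ closure Ω) :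
    ∃ N, closure Ω ⊆ thickening ρ (chainSet Ω ρ z N) := by
  have hreach : Ω ⊆ ⋃ i, chainSet Ω ρ z i := by
    obtain ⟨w, hwΩ, hzw⟩ := Metric.mem_closure_iff.1 hz ρ hρ
    refine hconn.subset_of_closure_inter_subset (isOpen_iUnion (isOpen_chainSet hΩ ρ z))
      ⟨w, hwΩ, mem_iUnion.2 ⟨0, mem_ball_comm.1 hzw, hwΩ⟩⟩ fun x ⟨hxU, hxΩ⟩ => ?_
    obtain ⟨y, hyU, hxy⟩ := Metric.mem_closure_iff.1 hxU ρ hρ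
    obtain ⟨i, hyi⟩ := mem_iUnion.1 hyU
    exact mem_iUnion.2 ⟨i + 1, mem_thickening_iff.2 ⟨y, hyi, hxy⟩, hxΩ⟩
  refine hK.elim_directed_cover _ (fun i => isOpen_thickening) (fun x hx => ?_)
    (monotone_thickening_chainSet hρ z).directed_le
  obtain ⟨y, hyΩ, hxy⟩ := Metric.mem_closure_iff.1 hx ρ hρ
  obtain ⟨i, hyi⟩ := mem_iUnion.1 (hreach hyΩ)
  exact mem_iUnion.2 ⟨i, mem_thickening_iff.2 ⟨y, hyi, hxy⟩⟩

variable [ProperSpace X] [MeasureSpace X] [BorelSpace X]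
  [IsFiniteMeasureOnCompacts (volume : Measure X)] [(volume : Measure X).IsOpenPosMeasure]
  {k : X → X → ℝ}

lemma exists_pos_mul_setIntegral_le_iterate_of_mem_thickening_chainSet (hΩ : IsOpen Ω)
    (hΩb : Bornology.IsBounded Ω) (hk : Continuous (Function.uncurry k)) (hk0 : ∀ x y, 0 ≤ k x y)
    {ρ k₀ : ℝ} (hρ : 0 < ρ) (hk₀ : 0 < k₀)
    (hkpos : ∀ x ∈ closure Ω, ∀ y ∈ closure Ω, dist x y < 3 * ρ → k₀ ≤ k x y) (z : X) (i : ℕ) :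
    ∃ η > 0, ∀ φ : X → ℝ, ContinuousOn φ (closure Ω) → (∀ y ∈ Ω, 0 ≤ φ y) →
      ∀ x ∈ closure Ω ∩ thickening ρ (chainSet Ω ρ z i),
        η * ∫ y in Ω ∩ ball z ρ, φ y ≤ (kernelIntegral Ω k)^[i + 1] φ x := by
  induction i with
  | zero =>
    refine ⟨k₀, hk₀, fun φ hφ hφ0 x ⟨hxΩ, hx⟩ => ?_⟩
    obtain ⟨y, ⟨hyz, -⟩, hxy⟩ := mem_thickening_iff.1 hx
    have hB : Ω ∩ ball z ρ ⊆ Ω := inter_subset_left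
    calc k₀ * ∫ y in Ω ∩ ball z ρ, φ y = ∫ y in Ω ∩ ball z ρ, k₀ * φ y :=
          (integral_const_mul _ _).symm
      _ ≤ ∫ y in Ω ∩ ball z ρ, k x y * φ y := by
          refine setIntegral_mono_on (((hφ.integrableOn_compact hΩb.isCompact_closure).mono_set
            (hB.trans subset_closure)).const_mul k₀)
            ((integrableOn_kernel_mul hΩb hk hφ x).mono_set hB)
            (hΩ.measurableSet.inter measurableSet_ball) fun q ⟨hqΩ, hqz⟩ => ?_
          refine mul_le_mul_of_nonneg_right (hkpos x hxΩ q (subset_closure hqΩ) ?_) (hφ0 q hqΩ)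
          rw [mem_ball] at hyz hqz
          linarith [dist_triangle x y q, dist_triangle y z q, dist_comm z q]
      _ ≤ kernelIntegral Ω k φ x :=
          setIntegral_kernel_mul_le hΩ.measurableSet hΩb hk hk0 hφ hφ0 hB x
  | succ i ih =>
    obtain ⟨η, hη, ih⟩ := ih
    obtain ⟨ω, hω, hvol⟩ := hΩb.isCompact_closure.exists_pos_le_measureReal_ball_inter
      (isOpen_chainSet hΩ ρ z (i + 1)) hρ
    refine ⟨k₀ * η * ω, by positivity, fun φ hφ hφ0 x hx => ?_⟩
    set ψ := (kernelIntegral Ω k)^[i + 1] φ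
    have hψ := continuousOn_iterate_kernelIntegral hΩ.measurableSet hΩb hk hφ (i + 1)
    have hψ0 := iterate_kernelIntegral_nonneg hΩ.measurableSet hk0 hφ0 (i + 1)
    set I := ∫ y in Ω ∩ ball z ρ, φ y
    have hI : 0 ≤ I :=
      setIntegral_nonneg (hΩ.measurableSet.inter measurableSet_ball) fun y hy => hφ0 y hy.1
    set A := ball x (2 * ρ) ∩ chainSet Ω ρ z (i + 1)
    have hAΩ : A ⊆ Ω := inter_subset_right.trans (chainSet_subset ρ z _)
    have hpoint : ∀ q ∈ A, k₀ * (η * I) ≤ k x q * ψ q := by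
      rintro q ⟨hqx, hq⟩
      have hqΩ := chainSet_subset ρ z _ hq
      have hxq : dist x q < 3 * ρ := by linarith [mem_ball'.1 hqx]
      exact mul_le_mul (hkpos x hx.1 q (subset_closure hqΩ) hxq)
        (ih φ hφ hφ0 q ⟨subset_closure hqΩ, hq.1⟩) (by positivity) (hk0 x q)
    calc k₀ * η * ω * I ≤ volume.real A * (k₀ * (η * I)) := by
          nlinarith [hvol x hx, mul_nonneg (mul_nonneg hk₀.le hη.le) hI]
      _ = ∫ _ in A, k₀ * (η * I) := by rw [setIntegral_const, smul_eq_mul]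
      _ ≤ ∫ q in A, k x q * ψ q :=
          setIntegral_mono_on
            (integrableOn_const ((measure_mono hAΩ).trans_lt hΩb.measure_lt_top).ne)
            ((integrableOn_kernel_mul hΩb hk hψ x).mono_set hAΩ)
            (measurableSet_ball.inter (isOpen_chainSet hΩ ρ z _).measurableSet) hpoint
      _ ≤ (kernelIntegral Ω k)^[i + 2] φ x := by
          rw [Function.iterate_succ_apply']
          exact setIntegral_kernel_mul_le hΩ.measurableSet hΩb hk hk0 hψ hψ0 hAΩ x

lemma exists_pos_mul_setIntegral_ball_le_iterate (hΩ : IsOpen Ω) (hconn : IsPreconnected Ω)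
    (hΩb : Bornology.IsBounded Ω) (hk : Continuous (Function.uncurry k)) (hk0 : ∀ x y, 0 ≤ k x y)
    {ρ k₀ : ℝ} (hρ : 0 < ρ) (hk₀ : 0 < k₀)
    (hkpos : ∀ x ∈ closure Ω, ∀ y ∈ closure Ω, dist x y < 3 * ρ → k₀ ≤ k x y)
    {z : X} (hz : z ∈ closure Ω) :
    ∃ N : ℕ, ∃ η > 0, ∀ φ : X → ℝ, ContinuousOn φ (closure Ω) → (∀ y ∈ Ω, 0 ≤ φ y) →
      ∀ x ∈ closure Ω, η * ∫ y in Ω ∩ ball z ρ, φ y ≤ (kernelIntegral Ω k)^[N] φ x := by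
  obtain ⟨N, hN⟩ := exists_closure_subset_thickening_chainSet hΩ hconn hΩb.isCompact_closure hρ hz
  obtain ⟨η, hη, hbound⟩ := exists_pos_mul_setIntegral_le_iterate_of_mem_thickening_chainSet hΩ
    hΩb hk hk0 hρ hk₀ hkpos z N
  exact ⟨N + 1, η, hη, fun φ hφ hφ0 x hx => hbound φ hφ hφ0 x ⟨hx, hN hx⟩⟩

lemma exists_pos_mul_integral_le_iterate (hΩ : IsOpen Ω) (hconn : IsPreconnected Ω)
    (hΩb : Bornology.IsBounded Ω) (hk : Continuous (Function.uncurry k)) (hk0 : ∀ x y, 0 ≤ k x y)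
    (hdiag : ∀ x ∈ closure Ω, 0 < k x x) :
    ∃ N₀ : ℕ, ∃ η > 0, ∀ φ : X → ℝ, ContinuousOn φ (closure Ω) → (∀ y ∈ Ω, 0 ≤ φ y) →
      ∃ N ≤ N₀, ∀ x ∈ closure Ω, η * ∫ y in Ω, φ y ≤ (kernelIntegral Ω k)^[N] φ x := by
  have hK := hΩb.isCompact_closure
  obtain ⟨r, hr, k₀, hk₀, hkpos⟩ := hK.exists_pos_le_of_dist_lt hk hdiag
  have hρ : 0 < r / 3 := by positivity
  have hkpos' : ∀ x ∈ closure Ω, ∀ y ∈ closure Ω, dist x y < 3 * (r / 3) → k₀ ≤ k x y := by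
    simpa [mul_div_cancel₀] using hkpos
  obtain ⟨W, hWK, hW⟩ := hK.elim_nhds_subcover (fun w => ball w (r / 3))
    fun w _ => ball_mem_nhds w hρ
  rcases W.eq_empty_or_nonempty with rfl | hWne
  · refine ⟨0, 1, one_pos, fun φ _ _ => ⟨0, le_rfl, fun x hx => ?_⟩⟩
    simpa using hW hx
  choose! N η hη hbound using fun z hz =>
    exists_pos_mul_setIntegral_ball_le_iterate hΩ hconn hΩb hk hk0 hρ hk₀ hkpos' (hWK z hz)
  obtain ⟨z₀, hz₀, hmin⟩ := W.exists_min_image η hWne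
  have hcard : (0 : ℝ) < W.card := by exact_mod_cast hWne.card_pos
  refine ⟨W.sup N, η z₀ / W.card, div_pos (hη z₀ hz₀) hcard, fun φ hφ hφ0 => ?_⟩
  -- pigeonhole: some ball of the cover carries a `1 / W.card` share of the mass
  have hsum := integral_le_sum_setIntegral_of_subset_biUnion hΩ.measurableSet
    ((hφ.integrableOn_compact (μ := volume) hK).mono_set subset_closure) hφ0 W
    (fun _ => measurableSet_ball) (subset_closure.trans hW)
  obtain ⟨z, hz, hmass⟩ := Finset.exists_le_of_sum_le hWne
    (f := fun _ => (∫ y in Ω, φ y) / W.card) (g := fun z => ∫ y in Ω ∩ ball z (r / 3), φ y)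
    (by rwa [Finset.sum_const, nsmul_eq_mul, mul_div_cancel₀ _ hcard.ne'])
  refine ⟨N z, Finset.le_sup hz, fun x hx => ?_⟩
  have hI : 0 ≤ ∫ y in Ω, φ y := setIntegral_nonneg hΩ.measurableSet hφ0
  calc η z₀ / W.card * ∫ y in Ω, φ y = η z₀ * ((∫ y in Ω, φ y) / W.card) := by ring
    _ ≤ η z * ∫ y in Ω ∩ ball z (r / 3), φ y :=
        mul_le_mul (hmin z hz) hmass (by positivity) (hη z hz).le
    _ ≤ (kernelIntegral Ω k)^[N z] φ x := hbound z hz φ hφ hφ0 x hx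

end Irreducibility

section Supersolution

variable {X : Type*} [MetricSpace X] [MeasureSpace X]

structure IsNonlocalSupersolution (Ω : Set X) (k : X → X → ℝ) (d L : ℝ) (u : X → ℝ → ℝ) :
    Prop where
  continuousOn : ContinuousOn (fun q : X × ℝ => u q.1 q.2) (closure Ω ×ˢ Ici 0)
  differentiableAt : ∀ x ∈ closure Ω, ∀ t > 0, DifferentiableAt ℝ (u x) t
  le_deriv : ∀ x ∈ closure Ω, ∀ t > 0, 0 ≤ u x t →
    d * kernelIntegral Ω k (fun y => u y t) x - L * u x t ≤ deriv (u x) t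

namespace IsNonlocalSupersolution

variable {Ω : Set X} {k : X → X → ℝ} {d L : ℝ} {u : X → ℝ → ℝ}

lemma le_exp_mul (hu : IsNonlocalSupersolution Ω k d L u) (hΩm : MeasurableSet Ω)
    (hk0 : ∀ x y, 0 ≤ k x y) (hd : 0 ≤ d) (hL : 0 ≤ L) {a t : ℝ} (ha : 0 ≤ a) (hat : a ≤ t)
    (hnn : ∀ s ∈ Icc a t, ∀ y ∈ closure Ω, 0 ≤ u y s) {x : X} (hx : x ∈ closure Ω) :
    u x a ≤ exp (L * (t - a)) * u x t := by
  refine le_exp_mul_of_hasDerivAt hat hL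
    ((hu.continuousOn.uncurry_left x hx).mono fun s hs => ha.trans hs.1)
    (fun s hs => (hu.differentiableAt x hx s (ha.trans_lt hs.1)).hasDerivAt) fun s hs => ?_
  have hus := hnn s (Ioo_subset_Icc_self hs)
  have hI := kernelIntegral_nonneg hΩm hk0 (fun y hy => hus y (subset_closure hy)) x (k := k)
  nlinarith [hu.le_deriv x hx s (ha.trans_lt hs.1) (hus x hx), mul_nonneg hd hI]

variable [ProperSpace X]

lemma pos (hu : IsNonlocalSupersolution Ω k d L u) (hΩb : Bornology.IsBounded Ω)
    (hΩm : MeasurableSet Ω) (hk0 : ∀ x y, 0 ≤ k x y) (hd : 0 ≤ d) (hL : 0 ≤ L)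
    (h0 : ∀ x ∈ closure Ω, 0 < u x 0) : ∀ t ≥ 0, ∀ x ∈ closure Ω, 0 < u x t := by
  by_contra! ⟨t₀, ht₀, x₀, hx₀, hneg⟩
  obtain ⟨t, ⟨ht, -⟩, hbefore, hat, x, hx, hzero⟩ := hΩb.isCompact_closure.exists_first_zero
    (hu.continuousOn.mono (prod_mono subset_rfl Icc_subset_Ici_self)) h0 hx₀ ⟨ht₀, le_rfl⟩ hneg
  have hnn : ∀ s ∈ Icc 0 t, ∀ y ∈ closure Ω, 0 ≤ u y s := fun s hs y hy =>
    hs.2.eq_or_lt.elim (fun h => h ▸ hat y hy) fun h => (hbefore s ⟨hs.1, h⟩ y hy).le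
  have h := hu.le_exp_mul hΩm hk0 hd hL le_rfl ht.le hnn hx
  rw [hzero, mul_zero] at h
  exact (h0 x hx).not_ge h

variable [BorelSpace X] [IsFiniteMeasureOnCompacts (volume : Measure X)]

lemma exp_neg_mul_kernelIntegral_le (hu : IsNonlocalSupersolution Ω k d L u)
    (hΩm : MeasurableSet Ω) (hΩb : Bornology.IsBounded Ω) (hk : Continuous (Function.uncurry k))
    (hk0 : ∀ x y, 0 ≤ k x y) (hd : 0 ≤ d) (hL : 0 ≤ L)
    (hpos : ∀ t ≥ 0, ∀ x ∈ closure Ω, 0 < u x t) {τ s : ℝ} (hτ : 0 ≤ τ)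
    (hs : s ∈ Icc τ (τ + 1)) (x : X) :
    exp (-L) * kernelIntegral Ω k (fun y => u y τ) x ≤ kernelIntegral Ω k (fun y => u y s) x := by
  have hnn : ∀ r ≥ τ, ∀ y ∈ closure Ω, 0 ≤ u y r := fun r hr y hy =>
    (hpos r (hτ.trans hr) y hy).le
  calc exp (-L) * kernelIntegral Ω k (fun y => u y τ) x
      ≤ exp (-L) * kernelIntegral Ω k (fun y => exp L * u y s) x := by
        refine mul_le_mul_of_nonneg_left (kernelIntegral_mono hΩm hΩb hk hk0
          (hu.continuousOn.uncurry_right τ hτ)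
          (continuousOn_const.mul (hu.continuousOn.uncurry_right s (hτ.trans hs.1)))
          (fun y hy => ?_) x) (exp_pos _).le
        have hy := subset_closure hy
        calc u y τ ≤ exp (L * (s - τ)) * u y s :=
              hu.le_exp_mul hΩm hk0 hd hL hτ hs.1 (fun r hr => hnn r hr.1) hy
          _ ≤ exp L * u y s := by
              gcongr
              · exact hnn s hs.1 y hy
              · nlinarith [hs.2]
    _ = kernelIntegral Ω k (fun y => u y s) x := by
        rw [kernelIntegral_const_mul, ← mul_assoc, ← exp_add, neg_add_cancel, exp_zero, one_mul]

lemma mul_kernelIntegral_le (hu : IsNonlocalSupersolution Ω k d L u) (hΩm : MeasurableSet Ω)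
    (hΩb : Bornology.IsBounded Ω) (hk : Continuous (Function.uncurry k)) (hk0 : ∀ x y, 0 ≤ k x y)
    (hd : 0 ≤ d) (hL : 0 ≤ L) (hpos : ∀ t ≥ 0, ∀ x ∈ closure Ω, 0 < u x t) {τ : ℝ} (hτ : 0 ≤ τ)
    {x : X} (hx : x ∈ closure Ω) :
    d * exp (-(2 * L)) * kernelIntegral Ω k (fun y => u y τ) x ≤ u x (τ + 1) := by
  set J := kernelIntegral Ω k (fun y => u y τ) x
  have hJ0 : 0 ≤ J := kernelIntegral_nonneg hΩm hk0
    (fun y hy => (hpos τ hτ y (subset_closure hy)).le) x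
  have hmain := add_mul_le_exp_mul_of_hasDerivAt (f := u x) (c := d * exp (-L) * J)
    (le_add_of_nonneg_right zero_le_one) hL (by positivity)
    ((hu.continuousOn.uncurry_left x hx).mono fun s hs => hτ.trans hs.1)
    (fun s hs => (hu.differentiableAt x hx s (hτ.trans_lt hs.1)).hasDerivAt) fun s hs => by
      have hder := hu.le_deriv x hx s (hτ.trans_lt hs.1) (hpos s (hτ.trans hs.1.le) x hx).le
      nlinarith [mul_le_mul_of_nonneg_left (hu.exp_neg_mul_kernelIntegral_le hΩm hΩb hk hk0 hd hL
        hpos hτ (Ioo_subset_Icc_self hs) x) hd]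
  rw [add_sub_cancel_left, mul_one, mul_one] at hmain
  calc d * exp (-(2 * L)) * J = exp (-L) * (d * exp (-L) * J) := by
        rw [show -(2 * L) = -L + -L by ring, exp_add]; ring
    _ ≤ exp (-L) * (exp L * u x (τ + 1)) :=
        mul_le_mul_of_nonneg_left (by linarith [hpos τ hτ x hx]) (exp_pos _).le
    _ = u x (τ + 1) := by rw [← mul_assoc, ← exp_add, neg_add_cancel, exp_zero, one_mul]

lemma pow_mul_iterate_le (hu : IsNonlocalSupersolution Ω k d L u) (hΩm : MeasurableSet Ω)
    (hΩb : Bornology.IsBounded Ω) (hk : Continuous (Function.uncurry k)) (hk0 : ∀ x y, 0 ≤ k x y)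
    (hd : 0 ≤ d) (hL : 0 ≤ L) (hpos : ∀ t ≥ 0, ∀ x ∈ closure Ω, 0 < u x t) {τ : ℝ} (hτ : 0 ≤ τ)
    (N : ℕ) : ∀ x ∈ closure Ω,
      (d * exp (-(2 * L))) ^ N * (kernelIntegral Ω k)^[N] (fun y => u y τ) x ≤ u x (τ + N) := by
  have hslice : ∀ s ≥ 0, ContinuousOn (fun y => u y s) (closure Ω) := fun s hs =>
    hu.continuousOn.uncurry_right s hs
  set c := d * exp (-(2 * L))
  induction N with
  | zero => simp
  | succ N ih =>
    intro x hx
    have hτN : 0 ≤ τ + N := by positivity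
    calc c ^ (N + 1) * (kernelIntegral Ω k)^[N + 1] (fun y => u y τ) x
        = c * kernelIntegral Ω k
            (fun y => c ^ N * (kernelIntegral Ω k)^[N] (fun y => u y τ) y) x := by
          rw [Function.iterate_succ_apply', kernelIntegral_const_mul, pow_succ]; ring
      _ ≤ c * kernelIntegral Ω k (fun y => u y (τ + N)) x := by
          gcongr
          exact kernelIntegral_mono hΩm hΩb hk hk0 (continuousOn_const.mul
            (continuousOn_iterate_kernelIntegral hΩm hΩb hk (hslice τ hτ) N)) (hslice _ hτN)
            (fun y hy => ih y (subset_closure hy)) x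
      _ ≤ u x (τ + N + 1) := hu.mul_kernelIntegral_le hΩm hΩb hk hk0 hd hL hpos hτN hx
      _ = u x (τ + ↑(N + 1)) := by push_cast; ring_nf

variable [(volume : Measure X).IsOpenPosMeasure]

lemma exists_pos_mul_integral_le (hu : IsNonlocalSupersolution Ω k d L u) (hΩ : IsOpen Ω)
    (hconn : IsPreconnected Ω) (hΩb : Bornology.IsBounded Ω)
    (hk : Continuous (Function.uncurry k)) (hk0 : ∀ x y, 0 ≤ k x y)
    (hdiag : ∀ x ∈ closure Ω, 0 < k x x) (hd : 0 < d) (hL : 0 ≤ L)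
    (hpos : ∀ t ≥ 0, ∀ x ∈ closure Ω, 0 < u x t) :
    ∃ N : ℕ, ∃ κ > 0, ∀ τ ≥ 0, ∀ s ∈ Icc (0 : ℝ) 1, ∀ x ∈ closure Ω,
      κ * ∫ y in Ω, u y τ ≤ u x (τ + N + s) := by
  obtain ⟨N₀, η, hη, hirr⟩ := exists_pos_mul_integral_le_iterate hΩ hconn hΩb hk hk0 hdiag
  set c := d * exp (-(2 * L))
  have hc : 0 < c := by positivity
  refine ⟨N₀, min c 1 ^ N₀ * η * exp (-(L * (N₀ + 1))), by positivity,
    fun τ hτ s hs x hx => ?_⟩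
  obtain ⟨N, hN, hbound⟩ := hirr (fun y => u y τ) (hu.continuousOn.uncurry_right τ hτ)
    fun y hy => (hpos τ hτ y (subset_closure hy)).le
  set I := ∫ y in Ω, u y τ
  have hI : 0 ≤ I :=
    setIntegral_nonneg hΩ.measurableSet fun y hy => (hpos τ hτ y (subset_closure hy)).le
  have hpow : min c 1 ^ N₀ ≤ c ^ N :=
    (pow_le_pow_of_le_one (by positivity) (min_le_right _ _) hN).trans
      (pow_le_pow_left₀ (by positivity) (min_le_left _ _) N)
  have hiter : c ^ N * (η * I) ≤ u x (τ + N) :=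
    (mul_le_mul_of_nonneg_left (hbound x hx) (by positivity)).trans
      (hu.pow_mul_iterate_le hΩ.measurableSet hΩb hk hk0 hd.le hL hpos hτ N x hx)
  have hN' : (N : ℝ) ≤ N₀ := by exact_mod_cast hN
  have hlate : u x (τ + N) ≤ exp (L * (N₀ + 1)) * u x (τ + N₀ + s) := by
    refine (hu.le_exp_mul hΩ.measurableSet hk0 hd.le hL (a := τ + N) (t := τ + N₀ + s)
      (by positivity) (by linarith [hs.1])
      (fun r hr y hy => (hpos r (by linarith [hr.1, N.cast_nonneg (α := ℝ)]) y hy).le) hx).trans ?_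
    gcongr
    · exact (hpos _ (by linarith [hs.1, N₀.cast_nonneg (α := ℝ)]) x hx).le
    · linarith [hs.2, N.cast_nonneg (α := ℝ)]
  calc min c 1 ^ N₀ * η * exp (-(L * (N₀ + 1))) * I
      = exp (-(L * (N₀ + 1))) * (min c 1 ^ N₀ * (η * I)) := by ring
    _ ≤ exp (-(L * (N₀ + 1))) * (exp (L * (N₀ + 1)) * u x (τ + N₀ + s)) := by
        exact mul_le_mul_of_nonneg_left ((mul_le_mul_of_nonneg_right hpow (by positivity)).trans
          (hiter.trans hlate)) (exp_pos _).le
    _ = u x (τ + N₀ + s) := by rw [← mul_assoc, ← exp_add, neg_add_cancel, exp_zero, one_mul]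

end IsNonlocalSupersolution

end Supersolution

section LateMass

variable {X : Type*} [MetricSpace X] [ProperSpace X] [MeasureSpace X] [BorelSpace X]
  [IsFiniteMeasureOnCompacts (volume : Measure X)] {Ω : Set X} {u : X → ℝ → ℝ}

lemma exists_pos_forall_exists_le_integral (hΩm : MeasurableSet Ω) (hΩb : Bornology.IsBounded Ω)
    (hu : ContinuousOn (fun q : X × ℝ => u q.1 q.2) (closure Ω ×ˢ Ici 0))
    (hnn : ∀ t ≥ 0, ∀ x ∈ closure Ω, 0 ≤ u x t) {C : ℝ}
    (hbd : ∀ x ∈ closure Ω, ∀ t ≥ 0, u x t ≤ C) {g : X → ℝ} (hg : MemLp g 2 (volume.restrict Ω))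
    (hng : ¬ Tendsto (fun t => ∫ x in Ω, u x t * g x) atTop (𝓝 0)) :
    ∃ δ > 0, ∀ T, ∃ t ≥ T, δ ≤ ∫ x in Ω, u x t := by
  have : IsFiniteMeasure (volume.restrict Ω) := isFiniteMeasure_restrict.2 hΩb.measure_lt_top.ne
  have hmass : ¬ Tendsto (fun t => ∫ x in Ω, u x t) atTop (𝓝 0) := fun h =>
    hng (tendsto_integral_mul_of_tendsto_integral (hg.integrable one_le_two)
      ((eventually_ge_atTop 0).mono fun t ht =>
        ⟨((hu.uncurry_right t ht).mono subset_closure).aestronglyMeasurable hΩm,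
          (ae_restrict_iff' hΩm).2 (Eventually.of_forall fun x hx =>
            ⟨hnn t ht x (subset_closure hx), hbd x (subset_closure hx) t ht⟩)⟩) h)
  rw [Metric.tendsto_nhds] at hmass
  push Not at hmass
  obtain ⟨δ, hδ, hfreq⟩ := hmass
  refine ⟨δ, hδ, fun T => ?_⟩
  obtain ⟨t, ht, hδt⟩ := frequently_atTop.1 hfreq (max T 0)
  refine ⟨t, le_of_max_le_left ht, ?_⟩
  rwa [Real.dist_eq, sub_zero, abs_of_nonneg (setIntegral_nonneg hΩm fun x hx =>
    hnn t (le_of_max_le_right ht) x (subset_closure hx))] at hδt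

lemma IsNonlocalSupersolution.exists_pos_le_on_late_windows [(volume : Measure X).IsOpenPosMeasure]
    {k : X → X → ℝ} {d L : ℝ} (hu : IsNonlocalSupersolution Ω k d L u) (hΩ : IsOpen Ω)
    (hconn : IsPreconnected Ω) (hΩb : Bornology.IsBounded Ω)
    (hk : Continuous (Function.uncurry k)) (hk0 : ∀ x y, 0 ≤ k x y)
    (hdiag : ∀ x ∈ closure Ω, 0 < k x x) (hd : 0 < d) (hL : 0 ≤ L)
    (hpos : ∀ t ≥ 0, ∀ x ∈ closure Ω, 0 < u x t) {C : ℝ}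
    (hbd : ∀ x ∈ closure Ω, ∀ t ≥ 0, u x t ≤ C) {g : X → ℝ} (hg : MemLp g 2 (volume.restrict Ω))
    (hng : ¬ Tendsto (fun t => ∫ x in Ω, u x t * g x) atTop (𝓝 0)) :
    ∃ μ > 0, ∀ T₀, ∃ T ≥ T₀, ∀ t ∈ Icc T (T + 1), ∀ x ∈ closure Ω, μ ≤ u x t := by
  obtain ⟨δ, hδ, hmass⟩ := exists_pos_forall_exists_le_integral hΩ.measurableSet hΩb
    hu.continuousOn (fun t ht x hx => (hpos t ht x hx).le) hbd hg hng
  obtain ⟨N, κ, hκ, hspread⟩ :=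
    hu.exists_pos_mul_integral_le hΩ hconn hΩb hk hk0 hdiag hd hL hpos
  refine ⟨κ * δ, by positivity, fun T₀ => ?_⟩
  obtain ⟨τ, hτ, hδτ⟩ := hmass (max T₀ 0)
  refine ⟨τ + N, by linarith [le_max_left T₀ 0, N.cast_nonneg (α := ℝ)], fun t ht x hx => ?_⟩
  have h := hspread τ ((le_max_right _ _).trans hτ) (t - (τ + N))
    ⟨by linarith [ht.1], by linarith [ht.2]⟩ x hx
  rw [show τ + N + (t - (τ + N)) = t by ring] at h
  exact (mul_le_mul_of_nonneg_left hδτ hκ.le).trans h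

end LateMass

section Competition

variable {n : ℕ} {Ω : Set (Pt n)} {p : Pt n → Pt n → ℝ} {D : ℝ} {M vD : Pt n → ℝ}
  {w v : Pt n → ℝ → ℝ}

/-- `w` is the pressure exerted by the competitor: `b u` on `v` and `c v` on `u`. -/
structure SolvesNonlocalLogistic (Ω : Set (Pt n)) (p : Pt n → Pt n → ℝ) (D : ℝ)
    (M : Pt n → ℝ) (w v : Pt n → ℝ → ℝ) : Prop where
  continuousOn : ContinuousOn (fun q : Pt n × ℝ => v q.1 q.2) (closure Ω ×ˢ Ici 0)
  hasDerivAt : ∀ x ∈ closure Ω, ∀ t > 0,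
    HasDerivAt (v x) (D * nlOp Ω p (fun y => v y t) x + v x t * (M x - w x t - v x t)) t

lemma nlOp_eq (Ω : Set (Pt n)) (p : Pt n → Pt n → ℝ) (φ : Pt n → ℝ) (x : Pt n) :
    nlOp Ω p φ x = kernelIntegral Ω p φ x - (∫ y in Ω, p y x) * φ x := rfl

namespace SolvesNonlocalLogistic

lemma exists_isNonlocalSupersolution (hv : SolvesNonlocalLogistic Ω p D M w v) (hΩ : IsOpen Ω)
    (hΩb : Bornology.IsBounded Ω) (hp : Continuous (Function.uncurry p)) (hD : 0 ≤ D)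
    (hM : ContinuousOn M (closure Ω)) {C C' : ℝ} (hv_bd : ∀ x ∈ closure Ω, ∀ t ≥ 0, |v x t| ≤ C)
    (hw_bd : ∀ x ∈ closure Ω, ∀ t ≥ 0, |w x t| ≤ C') :
    ∃ L ≥ 0, IsNonlocalSupersolution Ω p D L v := by
  have hK := hΩb.isCompact_closure
  obtain ⟨CM, hCM⟩ := hK.exists_bound_of_continuousOn hM
  obtain ⟨A, hA⟩ := hK.exists_bound_of_continuousOn
    (continuous_kernelIntegral (k := fun x y => p y x) hΩ.measurableSet hΩb
      (hp.comp continuous_swap) (φ := fun _ => 1) continuousOn_const).continuousOn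
  refine ⟨|CM| + |C| + |C'| + D * |A|, by positivity, hv.continuousOn,
    fun x hx t ht => (hv.hasDerivAt x hx t ht).differentiableAt, fun x hx t ht hvt => ?_⟩
  rw [(hv.hasDerivAt x hx t ht).deriv, nlOp_eq]
  have hI : |∫ y in Ω, p y x| ≤ |A| := by
    simpa [kernelIntegral] using (hA x hx).trans (le_abs_self A)
  have hσ : -(|CM| + |C| + |C'| + D * |A|) ≤ M x - w x t - v x t - D * ∫ y in Ω, p y x := by
    have h₁ : |M x| ≤ |CM| := (hCM x hx).trans (le_abs_self _)
    have h₂ := (le_abs_self _).trans ((hw_bd x hx t ht.le).trans (le_abs_self C'))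
    have h₃ := (le_abs_self _).trans ((hv_bd x hx t ht.le).trans (le_abs_self C))
    have h₄ := mul_le_mul_of_nonneg_left ((le_abs_self _).trans hI) hD
    linarith [neg_abs_le (M x)]
  nlinarith [mul_le_mul_of_nonneg_left hσ hvt]

lemma lt_mul_profile (hv : SolvesNonlocalLogistic Ω p D M w v) (hΩ : IsOpen Ω)
    (hΩb : Bornology.IsBounded Ω) (hp : Continuous (Function.uncurry p)) (hp0 : ∀ x y, 0 ≤ p x y)
    (hD : 0 < D) (hvD : SemiTrivialProfile Ω p D M vD) {T S : ℝ} (hT : 0 < T) {β β' : ℝ → ℝ}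
    (hβ : ∀ t ∈ Icc T S, HasDerivAt β (β' t) t) (hinit : ∀ x ∈ closure Ω, v x T < β T * vD x)
    (hsuper : ∀ t ∈ Icc T S, ∀ x ∈ closure Ω, 0 < β' t + β t * (β t - 1) * vD x + w x t * β t) :
    ∀ t ∈ Icc T S, ∀ x ∈ closure Ω, v x t < β t * vD x := by
  obtain ⟨hvDc, hvD0, hvDeq⟩ := hvD
  by_contra! ⟨t₀, ht₀, x₀, hx₀, hle⟩
  have hF : ContinuousOn (fun q : Pt n × ℝ => β q.2 * vD q.1 - v q.1 q.2)
      (closure Ω ×ˢ Icc T S) :=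
    ((continuousOn_of_forall_continuousAt fun t ht => (hβ t ht).continuousAt).comp
      continuousOn_snd fun q hq => hq.2).mul (hvDc.comp continuousOn_fst fun q hq => hq.1) |>.sub
      (hv.continuousOn.mono (prod_mono subset_rfl fun t ht => hT.le.trans ht.1))
  obtain ⟨t, ⟨hTt, htS⟩, hbefore, hat, x, hx, hzero⟩ := hΩb.isCompact_closure.exists_first_zero
    (F := fun x t => β t * vD x - v x t) hF (fun x hx => sub_pos.2 (hinit x hx)) hx₀ ht₀
    (sub_nonpos.2 hle)
  have ht : t ∈ Icc T S := ⟨hTt.le, htS⟩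
  have hderiv := ((hβ t ht).mul_const (vD x)).sub (hv.hasDerivAt x hx t (hT.trans hTt))
  have hnonpos := hderiv.nonpos_of_pos_left hTt (fun s hs => hbefore s ⟨hs.1.le, hs.2⟩ x hx) hzero
  have hgap : 0 ≤ kernelIntegral Ω p (fun y => β t * vD y - v y t) x :=
    kernelIntegral_nonneg hΩ.measurableSet hp0 (fun y hy => hat y (subset_closure hy)) x
  have hsplit : kernelIntegral Ω p (fun y => β t * vD y - v y t) x =
      β t * kernelIntegral Ω p vD x - kernelIntegral Ω p (fun y => v y t) x := by
    simp only [kernelIntegral]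
    rw [← integral_const_mul, ← integral_sub ((integrableOn_kernel_mul hΩb hp hvDc x).const_mul _)
      (integrableOn_kernel_mul hΩb hp (hv.continuousOn.uncurry_right t (hT.le.trans hTt.le)) x)]
    congr 1; ext y; ring
  have hprofile := hvDeq x hx
  rw [nlOp_eq] at hprofile hnonpos
  rw [show v x t = β t * vD x by linarith] at hnonpos
  have hslope : β' t * vD x - (D * (kernelIntegral Ω p (fun y => v y t) x -
        (∫ y in Ω, p y x) * (β t * vD x)) + β t * vD x * (M x - w x t - β t * vD x)) =
      vD x * (β' t + β t * (β t - 1) * vD x + w x t * β t) +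
        D * kernelIntegral Ω p (fun y => β t * vD y - v y t) x := by
    rw [hsplit]; linear_combination (-β t) * hprofile
  linarith [mul_pos (hvD0 x hx) (hsuper t ht x hx), mul_nonneg hD.le hgap]

lemma lt_one_add_mul_exp_mul_profile (hv : SolvesNonlocalLogistic Ω p D M w v) (hΩ : IsOpen Ω)
    (hΩb : Bornology.IsBounded Ω) (hp : Continuous (Function.uncurry p)) (hp0 : ∀ x y, 0 ≤ p x y)
    (hD : 0 < D) (hvD : SemiTrivialProfile Ω p D M vD) {T γ vmin : ℝ} (hT : 0 < T) (hγ : 0 < γ)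
    (hvmin : 0 < vmin) (hvD_ge : ∀ x ∈ closure Ω, vmin ≤ vD x)
    (hw : ∀ t ≥ T, ∀ x ∈ closure Ω, 0 ≤ w x t) (hinit : ∀ x ∈ closure Ω, v x T < (1 + γ) * vD x) :
    ∀ t ≥ T, ∀ x ∈ closure Ω, v x t < (1 + γ * exp (vmin * (T - t))) * vD x := by
  intro t ht x hx
  refine hv.lt_mul_profile hΩ hΩb hp hp0 hD hvD hT (S := t)
    (β := fun s => 1 + γ * exp (vmin * (T - s)))
    (β' := fun s => -(vmin * (γ * exp (vmin * (T - s))))) (fun s _ => ?_)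
    (by simpa using hinit) (fun s hs y hy => ?_) t ⟨ht, le_rfl⟩ x hx
  · exact ((((hasDerivAt_id' s).const_sub T).const_mul vmin).exp.const_mul γ |>.const_add 1)
      |>.congr_deriv (by ring)
  · have hE : 0 < γ * exp (vmin * (T - s)) := by positivity
    have hy₁ := hvD_ge y hy
    have hy₂ := hw s hs.1 y hy
    nlinarith [mul_pos hE hE, mul_le_mul_of_nonneg_left hy₁ (mul_pos hE hE).le,
      mul_le_mul_of_nonneg_left hy₁ hE.le]

lemma lt_profile_of_le_pressure (hv : SolvesNonlocalLogistic Ω p D M w v) (hΩ : IsOpen Ω)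
    (hΩb : Bornology.IsBounded Ω) (hp : Continuous (Function.uncurry p)) (hp0 : ∀ x y, 0 ≤ p x y)
    (hD : 0 < D) (hvD : SemiTrivialProfile Ω p D M vD) {T γ μ : ℝ} (hT : 0 < T) (hγ : 0 < γ)
    (hγμ : 2 * γ ≤ μ) (hw : ∀ t ∈ Icc T (T + 1), ∀ x ∈ closure Ω, μ ≤ w x t)
    (hinit : ∀ x ∈ closure Ω, v x T < (1 + γ) * vD x) :
    ∀ x ∈ closure Ω, v x (T + 2 * γ / μ) < vD x := by
  have hμ : 0 < μ := by linarith
  have hlen : 2 * γ / μ ≤ 1 := (div_le_one hμ).2 hγμ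
  intro x hx
  have h := hv.lt_mul_profile hΩ hΩb hp hp0 hD hvD hT (S := T + 2 * γ / μ)
    (β := fun s => 1 + γ - μ / 2 * (s - T)) (β' := fun _ => -(μ / 2))
    (fun s _ => (((hasDerivAt_id' s).sub_const T).const_mul (μ / 2) |>.const_sub (1 + γ))
      |>.congr_deriv (by ring))
    (by simpa using hinit) (fun s hs y hy => ?_) (T + 2 * γ / μ)
    ⟨le_add_of_nonneg_right (by positivity), le_rfl⟩ x hx
  · rwa [show 1 + γ - μ / 2 * (T + 2 * γ / μ - T) = 1 by field_simp; ring, one_mul] at h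
  · have hβ : 1 ≤ 1 + γ - μ / 2 * (s - T) := by
      have : μ / 2 * (s - T) ≤ μ / 2 * (2 * γ / μ) := by gcongr; linarith [hs.2]
      rw [show μ / 2 * (2 * γ / μ) = γ by field_simp] at this
      linarith
    have hy₁ := (hvD.2.1 y hy).le
    have hy₂ := hw s ⟨hs.1, by linarith [hs.2]⟩ y hy
    nlinarith [mul_nonneg (mul_nonneg (by linarith : (0 : ℝ) ≤ 1 + γ - μ / 2 * (s - T))
      (by linarith : (0 : ℝ) ≤ 1 + γ - μ / 2 * (s - T) - 1)) hy₁]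

lemma lt_profile_of_lt_profile (hv : SolvesNonlocalLogistic Ω p D M w v) (hΩ : IsOpen Ω)
    (hΩb : Bornology.IsBounded Ω) (hp : Continuous (Function.uncurry p)) (hp0 : ∀ x y, 0 ≤ p x y)
    (hD : 0 < D) (hvD : SemiTrivialProfile Ω p D M vD) {T : ℝ} (hT : 0 < T)
    (hw : ∀ t ≥ T, ∀ x ∈ closure Ω, 0 < w x t) (hinit : ∀ x ∈ closure Ω, v x T < vD x) :
    ∀ t ≥ T, ∀ x ∈ closure Ω, v x t < vD x := by
  have hK := hΩb.isCompact_closure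
  obtain ⟨ε, hε, hgap⟩ := hK.exists_forall_le' (hvD.1.sub (hv.continuousOn.uncurry_right T hT.le))
    fun x hx => sub_pos.2 (hinit x hx)
  obtain ⟨V, hV⟩ := hK.exists_bound_of_continuousOn hvD.1
  set Vm := max V 1
  have hVm : 0 < Vm := lt_max_of_lt_right one_pos
  have hvD_le : ∀ x ∈ closure Ω, vD x ≤ Vm := fun x hx =>
    (le_abs_self _).trans ((hV x hx).trans (le_max_left _ _))
  set γ := min (ε / (2 * Vm)) (1 / 2)
  have hγ : 0 < γ := by positivity
  intro t ht x hx
  have h := hv.lt_mul_profile hΩ hΩb hp hp0 hD hvD hT (S := t)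
    (β := fun s => 1 - γ * exp (Vm * (T - s))) (β' := fun s => Vm * (γ * exp (Vm * (T - s))))
    (fun s _ => ((((hasDerivAt_id' s).const_sub T).const_mul Vm).exp.const_mul γ |>.const_sub 1)
      |>.congr_deriv (by ring)) (fun y hy => ?_) (fun s hs y hy => ?_) t ⟨ht, le_rfl⟩ x hx
  · have hE : 0 < γ * exp (Vm * (T - t)) := by positivity
    nlinarith [hvD.2.1 x hx]
  · have hεy : ε ≤ vD y - v y T := hgap y hy
    have hγε : γ * Vm ≤ ε / 2 :=
      calc γ * Vm ≤ ε / (2 * Vm) * Vm := by gcongr; exact min_le_left _ _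
        _ = ε / 2 := by field_simp
    simp only [sub_self, mul_zero, exp_zero, mul_one]
    nlinarith [mul_le_mul_of_nonneg_left (hvD_le y hy) hγ.le]
  · have hE : 0 < γ * exp (Vm * (T - s)) := by positivity
    have hE1 : γ * exp (Vm * (T - s)) ≤ 1 / 2 :=
      calc γ * exp (Vm * (T - s)) ≤ 1 / 2 * 1 := by
            gcongr
            · exact min_le_right _ _
            · exact exp_le_one_iff.2 (mul_nonpos_of_nonneg_of_nonpos hVm.le (by linarith [hs.1]))
        _ = 1 / 2 := mul_one _
    have hy₁ := hvD.2.1 y hy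
    have hy₂ := hvD_le y hy
    have hy₃ := hw s hs.1 y hy
    nlinarith [mul_pos hy₃ (by linarith : (0 : ℝ) < 1 - γ * exp (Vm * (T - s))),
      mul_nonneg hE.le (by nlinarith : (0 : ℝ) ≤ Vm - (1 - γ * exp (Vm * (T - s))) * vD y)]

end SolvesNonlocalLogistic

variable {k : Pt n → Pt n → ℝ} {d b c : ℝ} {m : Pt n → ℝ} {u : Pt n → ℝ → ℝ}

lemma IsBoundedClassicalSolution.solvesNonlocalLogistic_fst
    (hsol : IsBoundedClassicalSolution Ω k p d D b c m M u v) :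
    SolvesNonlocalLogistic Ω k d m (fun x t => c * v x t) u :=
  ⟨hsol.1, fun x hx t ht => (hsol.2.2.2.2 x hx t ht).1.congr_deriv (by ring)⟩

lemma IsBoundedClassicalSolution.solvesNonlocalLogistic_snd
    (hsol : IsBoundedClassicalSolution Ω k p d D b c m M u v) :
    SolvesNonlocalLogistic Ω p D M (fun x t => b * u x t) v :=
  ⟨hsol.2.1, fun x hx t ht => (hsol.2.2.2.2 x hx t ht).2⟩

lemma eventually_lt_profile_of_not_tendsto (hΩ : IsOpen Ω) (hconn : IsPreconnected Ω)
    (hΩb : Bornology.IsBounded Ω) (hk : Continuous (Function.uncurry k)) (hk0 : ∀ x y, 0 ≤ k x y)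
    (hkd : ∀ x, 0 < k x x) (hp : Continuous (Function.uncurry p)) (hp0 : ∀ x y, 0 ≤ p x y)
    (hm : ContinuousOn m (closure Ω)) (hd : 0 < d) (hD : 0 < D) (hb : 0 < b)
    (hvD : SemiTrivialProfile Ω p D M vD)
    (hu : SolvesNonlocalLogistic Ω k d m (fun x t => c * v x t) u)
    (hv : SolvesNonlocalLogistic Ω p D M (fun x t => b * u x t) v) {C : ℝ}
    (hbd : ∀ x ∈ closure Ω, ∀ t ≥ 0, |u x t| ≤ C ∧ |v x t| ≤ C)
    (hu0 : ∀ x ∈ closure Ω, 0 < u x 0)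
    (hweak : ∃ g : Pt n → ℝ, MemLp g 2 (volume.restrict Ω) ∧
      ¬ Tendsto (fun t => ∫ x in Ω, u x t * g x) atTop (𝓝 0)) :
    ∃ T : ℝ, 0 < T ∧ ∀ t ≥ T, ∀ x ∈ closure Ω, v x t < vD x := by
  obtain ⟨g, hg, hng⟩ := hweak
  obtain ⟨L, hL, hsuper⟩ := hu.exists_isNonlocalSupersolution hΩ hΩb hk hd.le hm
    (fun x hx t ht => (hbd x hx t ht).1) (C' := |c| * C) fun x hx t ht => by
      rw [abs_mul]; exact mul_le_mul_of_nonneg_left (hbd x hx t ht).2 (abs_nonneg c)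
  have hpos := hsuper.pos hΩb hΩ.measurableSet hk0 hd.le hL hu0
  obtain ⟨μ, hμ, hwindow⟩ := hsuper.exists_pos_le_on_late_windows hΩ hconn hΩb hk hk0
    (fun x _ => hkd x) hd hL hpos (fun x hx t ht => (le_abs_self _).trans (hbd x hx t ht).1) hg hng
  obtain ⟨vmin, hvmin, hvmin_le⟩ := hΩb.isCompact_closure.exists_forall_le' hvD.1 hvD.2.1
  set γ₀ := |C| / vmin + 1
  have hphase₁ := hv.lt_one_add_mul_exp_mul_profile hΩ hΩb hp hp0 hD hvD one_pos (γ := γ₀)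
    (by positivity) hvmin hvmin_le (fun t ht x hx => (mul_pos hb (hpos t (by linarith) x hx)).le)
    fun x hx => by
      have h₁ := (le_abs_self _).trans ((hbd x hx 1 zero_le_one).2.trans (le_abs_self C))
      have h₂ : |C| / vmin * vmin = |C| := div_mul_cancel₀ _ hvmin.ne'
      nlinarith [hvmin_le x hx, mul_le_mul_of_nonneg_left (hvmin_le x hx)
        (by positivity : (0 : ℝ) ≤ |C| / vmin)]
  have hdecay : Tendsto (fun t => γ₀ * exp (vmin * (1 - t))) atTop (𝓝 0) := by
    have h : Tendsto (fun t : ℝ => vmin * (1 - t)) atTop atBot :=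
      (tendsto_atBot_add_const_left atTop 1 tendsto_neg_atTop_atBot).const_mul_atBot hvmin
    simpa using (tendsto_exp_atBot.comp h).const_mul γ₀
  obtain ⟨T₀, hT₀⟩ := eventually_atTop.1
    ((hdecay.eventually (ge_mem_nhds (half_pos (mul_pos hb hμ)))).and (eventually_ge_atTop 1))
  obtain ⟨T, hT, hμT⟩ := hwindow T₀
  obtain ⟨hγ, hT1⟩ := hT₀ T hT
  set γ := γ₀ * exp (vmin * (1 - T))
  have hphase₂ := hv.lt_profile_of_le_pressure hΩ hΩb hp hp0 hD hvD (by linarith) (γ := γ)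
    (by positivity) (by linarith) (fun t ht x hx => mul_le_mul_of_nonneg_left (hμT t ht x hx) hb.le)
    (hphase₁ T hT1)
  have hT' : 0 < T + 2 * γ / (b * μ) := by positivity
  exact ⟨T + 2 * γ / (b * μ), hT', hv.lt_profile_of_lt_profile hΩ hΩb hp hp0 hD hvD hT'
    (fun t ht x hx => mul_pos hb (hpos t (hT'.le.trans ht) x hx)) hphase₂⟩

end Competition

theorem stmt_12_general {n : ℕ} (Ω : Set (Pt n)) (hΩ : IsBoundedDomain Ω)
    (k p : Pt n → Pt n → ℝ)
    (hk : IsDispersalKernel k) (hp : IsDispersalKernel p)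
    (m M : Pt n → ℝ)
    (hm : ContinuousOn m (closure Ω)) (hM : ContinuousOn M (closure Ω))
    (d D b c : ℝ) (hd : 0 < d) (hD : 0 < D) (hb : 0 < b) (hc : 0 < c)
    (ud vD : Pt n → ℝ)
    (hud : SemiTrivialProfile Ω k d m ud) (hvD : SemiTrivialProfile Ω p D M vD)
    (u v : Pt n → ℝ → ℝ)
    (hsol : IsBoundedClassicalSolution Ω k p d D b c m M u v)
    (hu0 : ∀ x ∈ closure Ω, 0 < u x 0) (hv0 : ∀ x ∈ closure Ω, 0 < v x 0) :
    ((∃ g : Pt n → ℝ, MemLp g 2 (volume.restrict Ω) ∧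
        ¬ Tendsto (fun t => ∫ x in Ω, u x t * g x) atTop (𝓝 0)) →
      ∃ T₁ : ℝ, 0 < T₁ ∧ ∀ t ≥ T₁, ∀ x ∈ closure Ω, v x t < vD x) ∧
    ((∃ g : Pt n → ℝ, MemLp g 2 (volume.restrict Ω) ∧
        ¬ Tendsto (fun t => ∫ x in Ω, v x t * g x) atTop (𝓝 0)) →
      ∃ T₂ : ℝ, 0 < T₂ ∧ ∀ t ≥ T₂, ∀ x ∈ closure Ω, u x t < ud x) := by
  obtain ⟨hΩo, hconn, hΩb⟩ := hΩ
  obtain ⟨hk, hk0, hkd, -, -⟩ := hk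
  obtain ⟨hp, hp0, hpd, -, -⟩ := hp
  obtain ⟨C, hC⟩ := hsol.2.2.1
  have hu := hsol.solvesNonlocalLogistic_fst
  have hv := hsol.solvesNonlocalLogistic_snd
  exact ⟨eventually_lt_profile_of_not_tendsto hΩo hconn.isPreconnected hΩb hk hk0 hkd hp hp0 hm
      hd hD hb hvD hu hv hC hu0,
    eventually_lt_profile_of_not_tendsto hΩo hconn.isPreconnected hΩb hp hp0 hpd hk hk0 hM
      hD hd hc hud hv hu (fun x hx t ht => (hC x hx t ht).symm) hv0⟩

theorem stmt_12 {n : ℕ} (Ω : Set (Pt n)) (hΩ : IsBoundedDomain Ω)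
    (k p : Pt n → Pt n → ℝ)
    (hk : IsDispersalKernel k) (hp : IsDispersalKernel p)
    (hks : SymmKernel k) (hps : SymmKernel p)
    (m M : Pt n → ℝ)
    (hm : ContinuousOn m (closure Ω)) (hM : ContinuousOn M (closure Ω))
    (hmnc : Nonconstant Ω m) (hMnc : Nonconstant Ω M)
    (d D b c : ℝ) (hd : 0 < d) (hD : 0 < D) (hb : 0 < b) (hc : 0 < c)
    (ud vD : Pt n → ℝ)
    (hud : SemiTrivialProfile Ω k d m ud) (hvD : SemiTrivialProfile Ω p D M vD)
    (u v : Pt n → ℝ → ℝ)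
    (hsol : IsBoundedClassicalSolution Ω k p d D b c m M u v)
    (hu0 : ∀ x ∈ closure Ω, 0 < u x 0) (hv0 : ∀ x ∈ closure Ω, 0 < v x 0) :
    ((∃ g : Pt n → ℝ, MemLp g 2 (volume.restrict Ω) ∧
        ¬ Tendsto (fun t => ∫ x in Ω, u x t * g x) atTop (𝓝 0)) →
      ∃ T₁ : ℝ, 0 < T₁ ∧ ∀ t ≥ T₁, ∀ x ∈ closure Ω, v x t < vD x) ∧
    ((∃ g : Pt n → ℝ, MemLp g 2 (volume.restrict Ω) ∧
        ¬ Tendsto (fun t => ∫ x in Ω, v x t * g x) atTop (𝓝 0)) →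
      ∃ T₂ : ℝ, 0 < T₂ ∧ ∀ t ≥ T₂, ∀ x ∈ closure Ω, u x t < ud x) :=
  stmt_12_general Ω hΩ k p hk hp m M hm hM d D b c hd hD hb hc ud vD hud hvD u v hsol hu0 hv0
end
end

section
/- Assume k and p are symmetric dispersal kernels, m, M ∈ C(Ω̄) are nonconstant, d, D, b, c > 0, and assume positive semi-trivial profiles u_d and v_D exist. Let (u,v) be a bounded classical solution of the competition system with u(x,0) > 0 and v(x,0) > 0 for all x ∈ Ω̄. (i) If u(·,t) converges weakly to 0 in L²(Ω) as t → ∞ (i.e., ∫_Ω u(x,t) g(x) dx → 0 for every g ∈ L²(Ω)), then there exists T₃ > 0 such that u(x,t) < u_d(x) for all x ∈ Ω̄ and t ≥ T₃. (ii) If v(·,t) converges weakly to 0 in L²(Ω) as t → ∞, then there exists T₄ > 0 such that v(x,t) < v_D(x) for all x ∈ Ω̄ and t ≥ T₄. -/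
open MeasureTheory Topology Filter

noncomputable section

/-
Weak convergence of `u(·, t)` to `0`, tested against the kernels `k x ·`, gives
`∫_Ω k(x, y) u(y, t) dy → 0`; as these kernels are equicontinuous in `x` on the compact `Ω̄`,
the convergence is uniform in `x`. Let `β > 0` bound both `u_d` and `d ∫_Ω k(·, y) u_d(y) dy / u_d`
from below on `Ω̄`. Eliminating `m` with the equation of `u_d`, the right-hand side of the
`u`-equation is at most `-β² / 8` wherever `u ≥ u_d - β / 2`, once the nonlocal term is small:
the competition term has the right sign because the competitor stays positive (a first-hitting-time
comparison argument). Hence every `u(x, ·)` falls below `u_d(x) - β / 2` within a time bounded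
uniformly in `x`, and stays there. The same argument applies to `v`.
-/

open Set Function

theorem le_max_sub_mul_of_hasDerivAt_le_neg {f f' : ℝ → ℝ} {a θ ρ : ℝ} (hρ : 0 < ρ)
    (hf : ContinuousOn f (Ici a)) (hf' : ∀ t > a, HasDerivAt f (f' t) t)
    (hbound : ∀ t > a, θ ≤ f t → f' t ≤ -ρ) :
    ∀ t ≥ a, f t ≤ max θ (f a - ρ * (t - a)) := by
  have stays_below : ∀ s > a, f s ≤ θ → ∀ t ≥ s, f t ≤ θ := fun s hs hfs t hst =>
    image_le_of_deriv_right_lt_deriv_boundary' (B := fun _ => θ) (B' := fun _ => 0)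
      (hf.mono (Icc_subset_Ici_iff hst |>.mpr hs.le))
      (fun r hr => (hf' r (hs.trans_le hr.1)).hasDerivWithinAt) hfs continuousOn_const
      (fun _ _ => hasDerivWithinAt_const _ _ _)
      (fun r hr hfr => (hbound r (hs.trans_le hr.1) hfr.ge).trans_lt (neg_lt_zero.mpr hρ))
      ⟨hst, le_rfl⟩
  intro t hat
  by_contra! hlt
  obtain ⟨hθt, hdrop⟩ := max_lt_iff.mp hlt
  have above : ∀ s ∈ Ioo a t, θ ≤ f s := fun s hs =>
    not_lt.mp fun h => (stays_below s hs.1 h.le t hs.2.le).not_gt hθt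
  have hmvt : f t - f a ≤ -ρ * (t - a) := by
    refine (convex_Icc a t).image_sub_le_mul_sub_of_deriv_le (hf.mono Icc_subset_Ici_self)
      (fun s hs => ?_) (fun s hs => ?_) a (left_mem_Icc.mpr hat) t (right_mem_Icc.mpr hat) hat
      <;> rw [interior_Icc] at hs
    · exact (hf' s hs.1).differentiableAt.differentiableWithinAt
    · rw [(hf' s hs.1).deriv]
      exact hbound s hs.1 (above s hs)
  linarith

theorem monotoneOn_mul_exp_of_neg_mul_le_deriv {f f' : ℝ → ℝ} {a b Λ : ℝ}
    (hf : ContinuousOn f (Icc a b)) (hf' : ∀ t ∈ Ioo a b, HasDerivAt f (f' t) t)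
    (hbound : ∀ t ∈ Ioo a b, -Λ * f t ≤ f' t) :
    MonotoneOn (fun t => f t * Real.exp (Λ * t)) (Icc a b) := by
  have hderiv : ∀ t ∈ Ioo a b, HasDerivAt (fun t => f t * Real.exp (Λ * t))
      ((f' t + Λ * f t) * Real.exp (Λ * t)) t := fun t ht => by
    have hexp : HasDerivAt (fun s => Real.exp (Λ * s)) (Real.exp (Λ * t) * Λ) t := by
      simpa using ((hasDerivAt_id t).const_mul Λ).exp
    exact ((hf' t ht).mul hexp).congr_deriv (by ring)
  refine monotoneOn_of_hasDerivWithinAt_nonneg (convex_Icc a b)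
    (f' := fun t => (f' t + Λ * f t) * Real.exp (Λ * t))
    (hf.mul (by fun_prop)) (fun t ht => ?_) (fun t ht => ?_) <;> rw [interior_Icc] at ht
  · exact (hderiv t ht).hasDerivWithinAt
  · exact mul_nonneg (by linarith [hbound t ht]) (Real.exp_pos _).le

theorem exists_first_nonpos_time {X : Type*} [TopologicalSpace X] [T2Space X] {K : Set X}
    (hK : IsCompact K) {w : X → ℝ → ℝ}
    (hw : ContinuousOn (fun q : X × ℝ => w q.1 q.2) (K ×ˢ Ici 0))
    {x₁ : X} {t₁ : ℝ} (hx₁ : x₁ ∈ K) (ht₁ : 0 ≤ t₁) (hw₁ : w x₁ t₁ ≤ 0) :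
    ∃ x₀ ∈ K, ∃ t₀ ≥ 0, w x₀ t₀ ≤ 0 ∧ ∀ x ∈ K, ∀ s ∈ Ico 0 t₀, 0 < w x s := by
  set A := K ×ˢ Icc 0 t₁ ∩ (fun q : X × ℝ => w q.1 q.2) ⁻¹' Iic 0
  have hA : IsCompact A := (hK.prod isCompact_Icc).of_isClosed_subset
    ((hw.mono (prod_mono_right Icc_subset_Ici_self)).preimage_isClosed_of_isClosed
      (hK.isClosed.prod isClosed_Icc) isClosed_Iic) inter_subset_left
  obtain ⟨_, ⟨⟨x₀, t₀⟩, ⟨⟨hx₀, ht₀⟩, hw₀⟩, rfl⟩, hleast⟩ :=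
    (hA.image continuous_snd).exists_isLeast ⟨t₁, (x₁, t₁), ⟨⟨hx₁, ht₁, le_rfl⟩, hw₁⟩, rfl⟩
  refine ⟨x₀, hx₀, t₀, ht₀.1, hw₀, fun x hx s hs => not_le.mp fun hws => ?_⟩
  exact hs.2.not_ge (hleast ⟨(x, s), ⟨⟨hx, hs.1, hs.2.le.trans ht₀.2⟩, hws⟩, rfl⟩)

theorem setIntegral_le_one_of_integral_eq_one {α : Type*} [MeasurableSpace α] {μ : Measure α}
    {f : α → ℝ} (hf : 0 ≤ f) (h1 : ∫ y, f y ∂μ = 1) (s : Set α) : ∫ y in s, f y ∂μ ≤ 1 :=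
  h1 ▸ setIntegral_le_integral (.of_integral_ne_zero (by simp [h1])) (ae_of_all _ hf)

section KernelIntegrals

variable {X : Type*} [TopologicalSpace X] {k : X → X → ℝ} {Ω : Set X}

theorem exists_abs_kernel_le (hk : Continuous (uncurry k)) (hcl : IsCompact (closure Ω)) :
    ∃ B, ∀ x ∈ closure Ω, ∀ y ∈ closure Ω, |k x y| ≤ B := by
  obtain ⟨B, hB⟩ := (hcl.prod hcl).exists_bound_of_continuousOn hk.continuousOn
  exact ⟨B, fun x hx y hy => hB (x, y) ⟨hx, hy⟩⟩

variable [MeasurableSpace X] [OpensMeasurableSpace X] {μ : Measure X}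

theorem continuousOn_setIntegral_kernel_mul [FirstCountableTopology X]
    [IsFiniteMeasureOnCompacts μ] (hk : Continuous (uncurry k)) (hΩ : MeasurableSet Ω)
    (hcl : IsCompact (closure Ω)) {φ : X → ℝ} (hφ : ContinuousOn φ (closure Ω)) :
    ContinuousOn (fun x => ∫ y in Ω, k x y * φ y ∂μ) (closure Ω) := by
  have : IsFiniteMeasure (μ.restrict Ω) := isFiniteMeasure_restrict.mpr
    ((measure_mono subset_closure).trans_lt hcl.measure_lt_top).ne
  obtain ⟨B, hB⟩ := exists_abs_kernel_le hk hcl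
  obtain ⟨A, hA⟩ := hcl.exists_bound_of_continuousOn hφ
  refine continuousOn_of_dominated (bound := fun _ => B * A) (fun x _ => ?_) (fun x hx => ?_)
    (integrable_const _) ?_
  · exact ((hk.comp (Continuous.prodMk_right x)).continuousOn.mul
      (hφ.mono subset_closure)).aestronglyMeasurable hΩ
  · filter_upwards [ae_restrict_mem hΩ] with y hy
    rw [norm_mul, Real.norm_eq_abs]
    exact mul_le_mul (hB x hx y (subset_closure hy)) (hA y (subset_closure hy)) (norm_nonneg _)
      ((abs_nonneg _).trans (hB x hx y (subset_closure hy)))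
  · exact ae_of_all _ fun y =>
      ((hk.comp (Continuous.prodMk_left y)).mul continuous_const).continuousOn

theorem setIntegral_kernel_mul_pos [μ.IsOpenPosMeasure] (hk : Continuous (uncurry k))
    (hΩ : IsOpen Ω) {x : X} (hx : x ∈ closure Ω) (hkx : 0 < k x x) (hk0 : ∀ y ∈ Ω, 0 ≤ k x y)
    {φ : X → ℝ} (hφ : ∀ y ∈ Ω, 0 < φ y) (hint : IntegrableOn (fun y => k x y * φ y) Ω μ) :
    0 < ∫ y in Ω, k x y * φ y ∂μ := by
  have hU : IsOpen {y | 0 < k x y} :=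
    isOpen_lt continuous_const (hk.comp (Continuous.prodMk_right x))
  obtain ⟨y, hyk, hyΩ⟩ := mem_closure_iff.mp hx _ hU hkx
  rw [setIntegral_pos_iff_support_of_nonneg_ae
    ((ae_restrict_mem hΩ.measurableSet).mono fun y hy => mul_nonneg (hk0 y hy) (hφ y hy).le) hint]
  refine ((hU.inter hΩ).measure_pos μ ⟨y, hyk, hyΩ⟩).trans_le (measure_mono ?_)
  exact fun z hz => ⟨(mul_pos hz.1 (hφ z hz.2)).ne', hz.2⟩

theorem exists_pos_le_setIntegral_kernel_mul_and_le [FirstCountableTopology X]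
    [IsFiniteMeasureOnCompacts μ] [μ.IsOpenPosMeasure] (hk : Continuous (uncurry k))
    (hk0 : ∀ x y, 0 ≤ k x y) (hkd : ∀ x, 0 < k x x) (hΩ : IsOpen Ω) (hcl : IsCompact (closure Ω))
    {φ : X → ℝ} (hφ : ContinuousOn φ (closure Ω)) (hφpos : ∀ x ∈ closure Ω, 0 < φ x)
    {d : ℝ} (hd : 0 < d) :
    ∃ β > 0, ∀ x ∈ closure Ω, β * φ x ≤ d * ∫ y in Ω, k x y * φ y ∂μ ∧ β ≤ φ x := by
  have hQ_pos : ∀ x ∈ closure Ω, 0 < ∫ y in Ω, k x y * φ y ∂μ := fun x hx =>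
    setIntegral_kernel_mul_pos hk hΩ hx (hkd x) (fun y _ => hk0 x y)
      (fun y hy => hφpos y (subset_closure hy))
      ((ContinuousOn.integrableOn_compact' hcl isClosed_closure.measurableSet
        ((hk.comp (Continuous.prodMk_right x)).continuousOn.mul hφ)).mono_set subset_closure)
  have hratio : ContinuousOn (fun x => min (d * (∫ y in Ω, k x y * φ y ∂μ) / φ x) (φ x))
      (closure Ω) :=
    ContinuousOn.inf ((continuousOn_const.mul
      (continuousOn_setIntegral_kernel_mul hk hΩ.measurableSet hcl hφ)).div hφ
        fun x hx => (hφpos x hx).ne') hφ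
  obtain ⟨β, hβ, hβle⟩ := hcl.exists_forall_le' hratio fun x hx =>
    lt_min (div_pos (mul_pos hd (hQ_pos x hx)) (hφpos x hx)) (hφpos x hx)
  refine ⟨β, hβ, fun x hx => ?_⟩
  have hβx := le_min_iff.mp (hβle x hx)
  exact ⟨(le_div_iff₀ (hφpos x hx)).mp hβx.1, hβx.2⟩

theorem integrableOn_kernel_mul_s13 [IsFiniteMeasureOnCompacts μ] (hk : Continuous (uncurry k))
    (hΩ : MeasurableSet Ω) (hcl : IsCompact (closure Ω)) {x : X} (hx : x ∈ closure Ω)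
    {w : X → ℝ} {C : ℝ} (hwm : AEStronglyMeasurable w (μ.restrict Ω)) (hwC : ∀ y ∈ Ω, |w y| ≤ C) :
    IntegrableOn (fun y => k x y * w y) Ω μ := by
  obtain ⟨B, hB⟩ := exists_abs_kernel_le hk hcl
  refine IntegrableOn.of_bound ((measure_mono subset_closure).trans_lt hcl.measure_lt_top)
    ((hk.comp (Continuous.prodMk_right x)).aestronglyMeasurable.mul hwm) (B * C) ?_
  filter_upwards [ae_restrict_mem hΩ] with y hy
  rw [norm_mul, Real.norm_eq_abs, Real.norm_eq_abs]
  exact mul_le_mul (hB x hx y (subset_closure hy)) (hwC y hy) (abs_nonneg _)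
    ((abs_nonneg _).trans (hB x hx y (subset_closure hy)))

theorem tendsto_setIntegral_kernel_mul [IsFiniteMeasureOnCompacts μ] (hk : Continuous (uncurry k))
    (hΩ : MeasurableSet Ω) (hcl : IsCompact (closure Ω)) {ι : Type*} {l : Filter ι}
    {w : ι → X → ℝ} (hweak : ∀ g, MemLp g 2 (μ.restrict Ω) →
      Tendsto (fun i => ∫ y in Ω, w i y * g y ∂μ) l (𝓝 0)) {x : X} (hx : x ∈ closure Ω) :
    Tendsto (fun i => ∫ y in Ω, k x y * w i y ∂μ) l (𝓝 0) := by
  have : IsFiniteMeasure (μ.restrict Ω) := isFiniteMeasure_restrict.mpr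
    ((measure_mono subset_closure).trans_lt hcl.measure_lt_top).ne
  obtain ⟨B, hB⟩ := exists_abs_kernel_le hk hcl
  have hmem : MemLp (k x) 2 (μ.restrict Ω) :=
    .of_bound (hk.comp (Continuous.prodMk_right x)).aestronglyMeasurable B <| by
      filter_upwards [ae_restrict_mem hΩ] with y hy
      exact hB x hx y (subset_closure hy)
  simpa only [mul_comm] using hweak _ hmem

theorem tendstoUniformlyOn_setIntegral_kernel_mul [IsFiniteMeasureOnCompacts μ]
    (hk : Continuous (uncurry k)) (hΩ : MeasurableSet Ω) (hcl : IsCompact (closure Ω))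
    {ι : Type*} {l : Filter ι} {w : ι → X → ℝ} {C : ℝ}
    (hw : ∀ᶠ i in l, AEStronglyMeasurable (w i) (μ.restrict Ω) ∧ ∀ y ∈ Ω, |w i y| ≤ C)
    (hweak : ∀ g, MemLp g 2 (μ.restrict Ω) →
      Tendsto (fun i => ∫ y in Ω, w i y * g y ∂μ) l (𝓝 0)) :
    TendstoUniformlyOn (fun i x => ∫ y in Ω, k x y * w i y ∂μ) 0 l (closure Ω) := by
  rw [Metric.tendstoUniformlyOn_iff]
  intro ε hε
  obtain ⟨η, hη, hηC⟩ := exists_pos_mul_lt (half_pos hε) (|C| * μ.real Ω)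
  -- Near each `x₀`, pointwise convergence at `x₀` and equicontinuity of the kernels suffice;
  -- compactness of `Ω̄` glues these neighbourhoods together.
  refine hcl.induction_on
    (p := fun s => ∀ᶠ i in l, ∀ x ∈ s, dist ((0 : X → ℝ) x) (∫ y in Ω, k x y * w i y ∂μ) < ε)
    (by simp) (fun s t hst ht => ht.mono fun i hi x hx => hi x (hst hx))
    (fun s t hs ht => (hs.and ht).mono fun i hi x hx => hx.elim (hi.1 x) (hi.2 x)) ?_
  intro x₀ hx₀
  obtain ⟨v, hv, hclose⟩ :=
    hcl.mem_uniformity_of_prod hk.continuousOn hx₀ (Metric.dist_mem_uniformity hη)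
  refine ⟨v ∩ closure Ω, inter_mem hv self_mem_nhdsWithin, ?_⟩
  filter_upwards [hw, (tendsto_setIntegral_kernel_mul hk hΩ hcl hweak hx₀).eventually
    (Metric.ball_mem_nhds 0 (half_pos hε))] with i ⟨hwm, hwC⟩ hi₀ x hx
  have hdiff : ‖(∫ y in Ω, k x y * w i y ∂μ) - ∫ y in Ω, k x₀ y * w i y ∂μ‖
      ≤ η * |C| * μ.real Ω := by
    rw [← integral_sub (integrableOn_kernel_mul_s13 hk hΩ hcl hx.2 hwm hwC)
      (integrableOn_kernel_mul_s13 hk hΩ hcl hx₀ hwm hwC)]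
    refine norm_setIntegral_le_of_norm_le_const
      ((measure_mono subset_closure).trans_lt hcl.measure_lt_top) fun y hy => ?_
    rw [← sub_mul, norm_mul, Real.norm_eq_abs, Real.norm_eq_abs]
    exact mul_le_mul (hclose x hx.1 y (subset_closure hy)).le ((hwC y hy).trans (le_abs_self C))
      (abs_nonneg _) hη.le
  rw [dist_zero_right] at hi₀
  rw [Pi.zero_apply, dist_zero_left]
  linarith [norm_sub_norm_le (∫ y in Ω, k x y * w i y ∂μ) (∫ y in Ω, k x₀ y * w i y ∂μ)]

end KernelIntegrals

theorem pos_of_hasDerivAt_nlOp {n : ℕ} {Ω : Set (Pt n)} (hΩ : MeasurableSet Ω)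
    (hcl : IsCompact (closure Ω)) {k : Pt n → Pt n → ℝ} (hk : ∀ x y, 0 ≤ k x y) {κ : ℝ}
    (hκ : ∀ x ∈ closure Ω, ∫ y in Ω, k y x ≤ κ) {e Λ : ℝ} (he : 0 ≤ e) {w g : Pt n → ℝ → ℝ}
    (hw : ContinuousOn (fun q : Pt n × ℝ => w q.1 q.2) (closure Ω ×ˢ Ici 0))
    (hg : ∀ x ∈ closure Ω, ∀ t ≥ 0, -Λ ≤ g x t)
    (hderiv : ∀ x ∈ closure Ω, ∀ t > 0,
      HasDerivAt (w x) (e * nlOp Ω k (fun y => w y t) x + w x t * g x t) t)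
    (h0 : ∀ x ∈ closure Ω, 0 < w x 0) :
    ∀ x ∈ closure Ω, ∀ t ≥ 0, 0 < w x t := by
  by_contra! ⟨x₁, hx₁, t₁, ht₁, hw₁⟩
  obtain ⟨x₀, hx₀, t₀, ht₀, hw₀, hpos⟩ := exists_first_nonpos_time hcl hw hx₁ ht₁ hw₁
  have ht₀pos : 0 < t₀ := ht₀.lt_of_ne fun h => (h0 x₀ hx₀).not_ge (h ▸ hw₀)
  have hcont : ContinuousOn (w x₀) (Icc 0 t₀) :=
    hw.comp (Continuous.prodMk_right x₀).continuousOn fun s hs => ⟨hx₀, hs.1⟩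
  -- Before `t₀` the nonlocal term is nonnegative, so `w(x₀, t) e^{(Λ + eκ) t}` cannot decrease.
  have hmono := monotoneOn_mul_exp_of_neg_mul_le_deriv (Λ := Λ + e * κ) hcont
    (fun s hs => hderiv x₀ hx₀ s hs.1) fun s hs => by
      have hws := hpos x₀ hx₀ s ⟨hs.1.le, hs.2⟩
      have hJ : 0 ≤ ∫ y in Ω, k x₀ y * w y s := setIntegral_nonneg hΩ fun y hy =>
        mul_nonneg (hk x₀ y) (hpos y (subset_closure hy) s ⟨hs.1.le, hs.2⟩).le
      have hκx := mul_le_mul_of_nonneg_right (hκ x₀ hx₀) hws.le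
      have hgx := mul_le_mul_of_nonneg_right (hg x₀ hx₀ s hs.1.le) hws.le
      simp only [nlOp]
      nlinarith
  have hgrowth := hmono (left_mem_Icc.mpr ht₀) (right_mem_Icc.mpr ht₀) ht₀
  simp only [mul_zero, Real.exp_zero, mul_one] at hgrowth
  nlinarith [h0 x₀ hx₀, Real.exp_pos ((Λ + e * κ) * t₀)]

theorem reaction_le_neg_of_profile {d W U J Q κ m r β : ℝ} (hW : 0 < W) (hβ : 0 ≤ β)
    (hprofile : d * (Q - κ * W) + W * (m - W) = 0) (hQ : β * W ≤ d * Q) (hβW : β ≤ W)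
    (hU : W - β / 2 ≤ U) (hJ : d * J ≤ β ^ 2 / 8) (hr : 0 ≤ r) :
    d * (J - κ * U) + U * (m - U - r) ≤ -(β ^ 2 / 8) := by
  have hU0 : β / 2 ≤ U := by linarith
  have hUW : 0 ≤ U * W := mul_nonneg (by linarith) hW.le
  have hmul : W * (d * (J - κ * U) + U * (m - U - r))
      = W * (d * J) - d * Q * U + U * W * (W - U) - W * U * r := by
    linear_combination U * hprofile
  refine le_of_mul_le_mul_left ?_ hW
  rw [hmul]
  linarith [mul_le_mul_of_nonneg_right hQ (by linarith : 0 ≤ U),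
    mul_nonneg hUW hr, mul_le_mul_of_nonneg_left hJ hW.le,
    mul_le_mul_of_nonneg_left (by linarith : W - U ≤ β / 2) hUW,
    mul_le_mul_of_nonneg_left hU0 (by positivity : 0 ≤ β * W / 2)]

theorem eventually_lt_profile_of_weak_tendsto_zero {n : ℕ} {Ω : Set (Pt n)} (hΩ : IsOpen Ω)
    (hcl : IsCompact (closure Ω)) {k : Pt n → Pt n → ℝ} (hk : Continuous (uncurry k))
    (hk0 : ∀ x y, 0 ≤ k x y) (hkd : ∀ x, 0 < k x x) {d : ℝ} (hd : 0 < d) {m ud : Pt n → ℝ}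
    (hud : SemiTrivialProfile Ω k d m ud) {u r : Pt n → ℝ → ℝ} {C : ℝ}
    (hC : ∀ x ∈ closure Ω, ∀ t ≥ 0, |u x t| ≤ C)
    (hu : ContinuousOn (fun q : Pt n × ℝ => u q.1 q.2) (closure Ω ×ˢ Ici 0))
    (hderiv : ∀ x ∈ closure Ω, ∀ t > 0, HasDerivAt (u x)
      (d * nlOp Ω k (fun y => u y t) x + u x t * (m x - u x t - r x t)) t)
    (hr : ∀ x ∈ closure Ω, ∀ t ≥ 0, 0 ≤ r x t)
    (hweak : ∀ g, MemLp g 2 (volume.restrict Ω) →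
      Tendsto (fun t => ∫ x in Ω, u x t * g x) atTop (𝓝 0)) :
    ∃ T > 0, ∀ t ≥ T, ∀ x ∈ closure Ω, u x t < ud x := by
  obtain ⟨hudc, hudpos, hprofile⟩ := hud
  obtain ⟨β, hβ, hβle⟩ :=
    exists_pos_le_setIntegral_kernel_mul_and_le (μ := volume) hk hk0 hkd hΩ hcl hudc hudpos hd
  set ρ := β ^ 2 / 8
  have hρ : 0 < ρ := by positivity
  have hbounded : ∀ᶠ t in atTop,
      AEStronglyMeasurable (fun y => u y t) (volume.restrict Ω) ∧ ∀ y ∈ Ω, |u y t| ≤ C := by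
    filter_upwards [eventually_ge_atTop 0] with t ht
    exact ⟨((hu.comp (Continuous.prodMk_left t).continuousOn fun y hy => ⟨hy, ht⟩).mono
      subset_closure).aestronglyMeasurable hΩ.measurableSet, fun y hy => hC y (subset_closure hy) t ht⟩
  have hsmall := Metric.tendstoUniformlyOn_iff.mp
    (tendstoUniformlyOn_setIntegral_kernel_mul hk hΩ.measurableSet hcl hbounded hweak)
    (ρ / d) (by positivity)
  obtain ⟨T₀, hT₀⟩ := eventually_atTop.mp (hsmall.and (eventually_ge_atTop 1))
  have hT₀pos : 0 < T₀ := zero_lt_one.trans_le (hT₀ T₀ le_rfl).2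
  have hrate : ∀ x ∈ closure Ω, ∀ t > T₀, ud x - β / 2 ≤ u x t →
      d * nlOp Ω k (fun y => u y t) x + u x t * (m x - u x t - r x t) ≤ -ρ := by
    intro x hx t ht hU
    have hJ := (hT₀ t ht.le).1 x hx
    rw [Pi.zero_apply, dist_zero_left, Real.norm_eq_abs, lt_div_iff₀ hd] at hJ
    have hdJ : d * ∫ y in Ω, k x y * u y t ≤ ρ := by
      nlinarith [le_abs_self (∫ y in Ω, k x y * u y t)]
    exact reaction_le_neg_of_profile (hudpos x hx) hβ.le (hprofile x hx) (hβle x hx).1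
      (hβle x hx).2 hU hdJ (hr x hx t (by linarith))
  refine ⟨T₀ + |C| / ρ, by positivity, fun t ht x hx => ?_⟩
  have hcont : ContinuousOn (u x) (Ici T₀) :=
    (hu.comp (Continuous.prodMk_right x).continuousOn fun s hs => ⟨hx, hs⟩).mono
      (Ici_subset_Ici.mpr hT₀pos.le)
  have hdrop : |C| ≤ ρ * (t - T₀) := (div_le_iff₀' hρ).mp (by linarith)
  have hdecay := le_max_sub_mul_of_hasDerivAt_le_neg hρ hcont
    (fun s hs => hderiv x hx s (hT₀pos.trans hs)) (hrate x hx) t (by nlinarith [abs_nonneg C])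
  have huT₀ : u x T₀ ≤ |C| := (le_abs_self _).trans ((hC x hx T₀ hT₀pos.le).trans (le_abs_self C))
  exact hdecay.trans_lt (max_lt (by linarith) (by linarith [hudpos x hx]))

theorem stmt_13_general {n : ℕ} (Ω : Set (Pt n)) (hΩ : IsBoundedDomain Ω)
    (k p : Pt n → Pt n → ℝ)
    (hk : IsDispersalKernel k) (hp : IsDispersalKernel p)
    (m M : Pt n → ℝ)
    (hm : ContinuousOn m (closure Ω)) (hM : ContinuousOn M (closure Ω))
    (d D b c : ℝ) (hd : 0 < d) (hD : 0 < D) (hb : 0 < b) (hc : 0 < c)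
    (ud vD : Pt n → ℝ)
    (hud : SemiTrivialProfile Ω k d m ud) (hvD : SemiTrivialProfile Ω p D M vD)
    (u v : Pt n → ℝ → ℝ)
    (hsol : IsBoundedClassicalSolution Ω k p d D b c m M u v)
    (hu0 : ∀ x ∈ closure Ω, 0 < u x 0) (hv0 : ∀ x ∈ closure Ω, 0 < v x 0) :
    ((∀ g : Pt n → ℝ, MemLp g 2 (volume.restrict Ω) →
        Tendsto (fun t => ∫ x in Ω, u x t * g x) atTop (𝓝 0)) →
      ∃ T₃ : ℝ, 0 < T₃ ∧ ∀ t ≥ T₃, ∀ x ∈ closure Ω, u x t < ud x) ∧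
    ((∀ g : Pt n → ℝ, MemLp g 2 (volume.restrict Ω) →
        Tendsto (fun t => ∫ x in Ω, v x t * g x) atTop (𝓝 0)) →
      ∃ T₄ : ℝ, 0 < T₄ ∧ ∀ t ≥ T₄, ∀ x ∈ closure Ω, v x t < vD x) := by
  obtain ⟨hΩo, -, hΩb⟩ := hΩ
  have hcl := hΩb.isCompact_closure
  obtain ⟨hkc, hk0, hkd, -, hk1⟩ := hk
  obtain ⟨hpc, hp0, hpd, -, hp1⟩ := hp
  obtain ⟨hu, hv, ⟨C, hC⟩, -, hderiv⟩ := hsol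
  obtain ⟨mB, hmB⟩ := hcl.exists_bound_of_continuousOn hm
  obtain ⟨MB, hMB⟩ := hcl.exists_bound_of_continuousOn hM
  have hupos := pos_of_hasDerivAt_nlOp hΩo.measurableSet hcl hk0
    (fun x _ => setIntegral_le_one_of_integral_eq_one (fun y => hk0 y x) (hk1 x) Ω) hd.le hu
    (g := fun x t => m x - u x t - c * v x t) (Λ := mB + C + c * C)
    (fun x hx t ht => by
      nlinarith [abs_le.mp (hC x hx t ht).1, abs_le.mp (hC x hx t ht).2, abs_le.mp (hmB x hx)])
    (fun x hx t ht => (hderiv x hx t ht).1) hu0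
  have hvpos := pos_of_hasDerivAt_nlOp hΩo.measurableSet hcl hp0
    (fun x _ => setIntegral_le_one_of_integral_eq_one (fun y => hp0 y x) (hp1 x) Ω) hD.le hv
    (g := fun x t => M x - b * u x t - v x t) (Λ := MB + b * C + C)
    (fun x hx t ht => by
      nlinarith [abs_le.mp (hC x hx t ht).1, abs_le.mp (hC x hx t ht).2, abs_le.mp (hMB x hx)])
    (fun x hx t ht => (hderiv x hx t ht).2) hv0
  refine ⟨fun hweak => ?_, fun hweak => ?_⟩
  · exact eventually_lt_profile_of_weak_tendsto_zero hΩo hcl hkc hk0 hkd hd hud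
      (fun x hx t ht => (hC x hx t ht).1) hu (fun x hx t ht => (hderiv x hx t ht).1)
      (fun x hx t ht => mul_nonneg hc.le (hvpos x hx t ht).le) hweak
  · exact eventually_lt_profile_of_weak_tendsto_zero hΩo hcl hpc hp0 hpd hD hvD
      (fun x hx t ht => (hC x hx t ht).2) hv
      (fun x hx t ht => sub_right_comm (M x) (b * u x t) (v x t) ▸ (hderiv x hx t ht).2)
      (fun x hx t ht => mul_nonneg hb.le (hupos x hx t ht).le) hweak

theorem stmt_13 {n : ℕ} (Ω : Set (Pt n)) (hΩ : IsBoundedDomain Ω)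
    (k p : Pt n → Pt n → ℝ)
    (hk : IsDispersalKernel k) (hp : IsDispersalKernel p)
    (hks : SymmKernel k) (hps : SymmKernel p)
    (m M : Pt n → ℝ)
    (hm : ContinuousOn m (closure Ω)) (hM : ContinuousOn M (closure Ω))
    (hmnc : Nonconstant Ω m) (hMnc : Nonconstant Ω M)
    (d D b c : ℝ) (hd : 0 < d) (hD : 0 < D) (hb : 0 < b) (hc : 0 < c)
    (ud vD : Pt n → ℝ)
    (hud : SemiTrivialProfile Ω k d m ud) (hvD : SemiTrivialProfile Ω p D M vD)
    (u v : Pt n → ℝ → ℝ)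
    (hsol : IsBoundedClassicalSolution Ω k p d D b c m M u v)
    (hu0 : ∀ x ∈ closure Ω, 0 < u x 0) (hv0 : ∀ x ∈ closure Ω, 0 < v x 0) :
    ((∀ g : Pt n → ℝ, MemLp g 2 (volume.restrict Ω) →
        Tendsto (fun t => ∫ x in Ω, u x t * g x) atTop (𝓝 0)) →
      ∃ T₃ : ℝ, 0 < T₃ ∧ ∀ t ≥ T₃, ∀ x ∈ closure Ω, u x t < ud x) ∧
    ((∀ g : Pt n → ℝ, MemLp g 2 (volume.restrict Ω) →
        Tendsto (fun t => ∫ x in Ω, v x t * g x) atTop (𝓝 0)) →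
      ∃ T₄ : ℝ, 0 < T₄ ∧ ∀ t ≥ T₄, ∀ x ∈ closure Ω, v x t < vD x) :=
  stmt_13_general Ω hΩ k p hk hp m M hm hM d D b c hd hD hb hc ud vD hud hvD u v hsol hu0 hv0

end
end

section
/- Let Ω ⊂ ℝⁿ be a nonempty bounded domain, let k be a dispersal kernel, and let d > 0, c₀ ≥ 0. Suppose u : Ω̄ × [0,∞) → ℝ is continuous and nonnegative, for each x ∈ Ω̄ the map t ↦ u(x,t) is differentiable with ∂u/∂t(x,t) ≥ d ∫_Ω k(x,y) u(y,t) dy − c₀ u(x,t) for all t ≥ 0, and u(·,0) is not identically zero on Ω̄. Then u(x,t) > 0 for every x ∈ Ω̄ and every t > 0. -/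
open MeasureTheory Topology Filter

noncomputable section

open Set

/-! Since `(e^{c₀t} u)' ≥ d e^{c₀t} ∫_Ω k u ≥ 0`, each `t ↦ e^{c₀t} u(x,t)` is nondecreasing, so a
zero of `u` at `(x,t)` forces `u(x,·) ≡ 0` on `[0,t]`. There the time derivative vanishes, hence
`∫_Ω k(x,y) u(y,s) dy = 0` for `0 < s < t`; as `k(x,·) > 0` near `x`, `u(·,s)` vanishes on `Ω` near
`x`, and letting `s → t` so does `u(·,t)`. Thus the zero set of `u(·,t)` in `Ω` is open, closed, and
nonempty as soon as `u(·,t)` vanishes somewhere on `closure Ω`; by connectedness `u(·,t) ≡ 0` on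
`Ω`, so `u(·,0) ≡ 0` on `Ω` and by continuity on `closure Ω`. -/

section Gronwall

variable {f : ℝ → ℝ} {c : ℝ}

theorem monotoneOn_exp_mul_of_neg_mul_le_deriv
    (hf : ∀ t, 0 ≤ t → ∃ f', HasDerivWithinAt f f' (Ici 0) t ∧ -(c * f t) ≤ f') :
    MonotoneOn (fun t => Real.exp (c * t) * f t) (Ici 0) := by
  choose! f' hf' hle using hf
  have hderiv : ∀ t ∈ Ici (0 : ℝ), HasDerivWithinAt (fun t => Real.exp (c * t) * f t)
      (Real.exp (c * t) * (c * f t + f' t)) (Ici 0) t := fun t ht =>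
    (((hasDerivAt_id t).const_mul c).exp.hasDerivWithinAt.mul (hf' t ht)).congr_deriv
      (by simp only [id, mul_one]; ring)
  refine monotoneOn_of_hasDerivWithinAt_nonneg
    (f' := fun t => Real.exp (c * t) * (c * f t + f' t)) (convex_Ici 0)
    (fun t ht => (hderiv t ht).continuousWithinAt) (fun t ht => ?_) (fun t ht => ?_)
  · rw [interior_Ici] at ht ⊢
    exact (hderiv t (mem_Ici.2 ht.le)).mono Ioi_subset_Ici_self
  · rw [interior_Ici] at ht
    exact mul_nonneg (Real.exp_pos _).le (by linarith [hle t ht.le])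

theorem eq_zero_of_le_deriv_of_eq_zero {g : ℝ → ℝ} {d : ℝ} (hd : 0 ≤ d)
    (hg : ∀ t, 0 ≤ t → 0 ≤ g t) (hnn : ∀ t, 0 ≤ t → 0 ≤ f t)
    (hf : ∀ t, 0 ≤ t → ∃ f', HasDerivWithinAt f f' (Ici 0) t ∧ d * g t - c * f t ≤ f')
    {s t : ℝ} (hs : 0 ≤ s) (hst : s ≤ t) (ht : f t = 0) : f s = 0 := by
  have hf₀ : ∀ t, 0 ≤ t → ∃ f', HasDerivWithinAt f f' (Ici 0) t ∧ -(c * f t) ≤ f' :=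
    fun r hr => (hf r hr).imp fun f' h => ⟨h.1, by nlinarith [mul_nonneg hd (hg r hr), h.2]⟩
  have hmono := monotoneOn_exp_mul_of_neg_mul_le_deriv hf₀ (mem_Ici.2 hs)
    (mem_Ici.2 (hs.trans hst)) hst
  simp only [ht, mul_zero] at hmono
  have := nonpos_of_mul_nonpos_right hmono (Real.exp_pos _)
  linarith [hnn s hs]

theorem eqOn_zero_of_le_deriv_of_eq_zero {g : ℝ → ℝ} {d : ℝ} (hd : 0 < d)
    (hg : ∀ t, 0 ≤ t → 0 ≤ g t) (hnn : ∀ t, 0 ≤ t → 0 ≤ f t)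
    (hf : ∀ t, 0 ≤ t → ∃ f', HasDerivWithinAt f f' (Ici 0) t ∧ d * g t - c * f t ≤ f')
    {t : ℝ} (ht : f t = 0) : EqOn g 0 (Ioo 0 t) := by
  intro s hs
  obtain ⟨f', hder, hle⟩ := hf s hs.1.le
  have hzero : f =ᶠ[𝓝 s] fun _ => 0 := by
    filter_upwards [Ioo_mem_nhds hs.1 hs.2] with r hr
    exact eq_zero_of_le_deriv_of_eq_zero hd.le hg hnn hf hr.1.le hr.2.le ht
  have hf' : f' = 0 := (hder.hasDerivAt (Ici_mem_nhds hs.1)).unique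
    ((hasDerivAt_const s 0).congr_of_eventuallyEq hzero)
  rw [hf', hzero.self_of_nhds, mul_zero, sub_zero] at hle
  exact le_antisymm (nonpos_of_mul_nonpos_right hle hd) (hg s hs.1.le)

end Gronwall

theorem IsPreconnected.eqOn_const_of_eventuallyEq {X Y : Type*} [TopologicalSpace X]
    [TopologicalSpace Y] [T1Space Y] {s : Set X} {f : X → Y} {a : Y} (hs : IsPreconnected s)
    (hso : IsOpen s) (hf : ContinuousOn f s) (hloc : ∀ x ∈ s, f x = a → f =ᶠ[𝓝 x] fun _ => a)
    {x₀ : X} (hx₀ : x₀ ∈ s) (hfx₀ : f x₀ = a) : EqOn f (fun _ => a) s := by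
  set U := {x | f =ᶠ[𝓝 x] fun _ => a}
  set V := s ∩ f ⁻¹' {a}ᶜ
  have hUV : Disjoint U V := Set.disjoint_left.2 fun x hU hV => hV.2 hU.self_of_nhds
  have hcover : s ⊆ U ∪ V := fun x hx =>
    (em (f x = a)).imp (hloc x hx) fun hne => ⟨hx, hne⟩
  have hsU := hs.subset_left_of_subset_union (isOpen_setOfPred_eventually_nhds)
    (hf.isOpen_inter_preimage hso isOpen_compl_singleton) hUV hcover ⟨x₀, hx₀, hloc x₀ hx₀ hfx₀⟩
  exact fun x hx => (hsU hx).self_of_nhds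

section Kernel

variable {X : Type*} [TopologicalSpace X] [MeasurableSpace X] {μ : Measure X}

theorem eqOn_zero_of_setIntegral_eq_zero [OpensMeasurableSpace X] [μ.IsOpenPosMeasure]
    {f : X → ℝ} {s : Set X} (hs : IsOpen s) (hf : ContinuousOn f s) (hnn : ∀ x ∈ s, 0 ≤ f x)
    (hint : IntegrableOn f s μ) (h : ∫ x in s, f x ∂μ = 0) : EqOn f 0 s :=
  Measure.eqOn_open_of_ae_eq (μ := μ)
    ((setIntegral_eq_zero_iff_of_nonneg_ae
      ((ae_restrict_iff' hs.measurableSet).2 (ae_of_all _ hnn)) hint).1 h)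
    hs hf continuousOn_const

theorem eventually_eq_zero_of_eq_zero [T2Space X] [OpensMeasurableSpace X] [μ.IsOpenPosMeasure]
    [IsFiniteMeasureOnCompacts μ] {Ω : Set X} (hΩ : IsOpen Ω) (hΩc : IsCompact (closure Ω))
    {k : X → X → ℝ} (hkc : ∀ x, Continuous (k x)) (hknn : ∀ x y, 0 ≤ k x y)
    (hkd : ∀ x, 0 < k x x) {c d : ℝ} (hd : 0 < d) {u : X → ℝ → ℝ}
    (hcont : ∀ t, 0 ≤ t → ContinuousOn (fun y => u y t) (closure Ω))
    (hnn : ∀ x ∈ closure Ω, ∀ t : ℝ, 0 ≤ t → 0 ≤ u x t)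
    (hderiv : ∀ x ∈ closure Ω, ∀ t : ℝ, 0 ≤ t →
      ∃ u' : ℝ, HasDerivWithinAt (u x) u' (Ici 0) t ∧
        d * (∫ y in Ω, k x y * u y t ∂μ) - c * u x t ≤ u')
    {x : X} (hx : x ∈ closure Ω) {t : ℝ} (ht : 0 < t) (hxt : u x t = 0) :
    ∀ᶠ y in 𝓝 x, y ∈ Ω → u y t = 0 := by
  have hintegrand_nonneg : ∀ s, 0 ≤ s → ∀ y ∈ Ω, 0 ≤ k x y * u y s := fun s hs y hy =>
    mul_nonneg (hknn x y) (hnn y (subset_closure hy) s hs)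
  have hintegrand_cont : ∀ s, 0 ≤ s → ContinuousOn (fun y => k x y * u y s) (closure Ω) :=
    fun s hs => (hkc x).continuousOn.mul (hcont s hs)
  have hvanish : ∀ s ∈ Ioo 0 t, ∀ y ∈ Ω, k x y * u y s = 0 := fun s hs =>
    eqOn_zero_of_setIntegral_eq_zero hΩ ((hintegrand_cont s hs.1.le).mono subset_closure)
      (hintegrand_nonneg s hs.1.le)
      (((hintegrand_cont s hs.1.le).integrableOn_compact hΩc).mono_set subset_closure)
      (eqOn_zero_of_le_deriv_of_eq_zero hd
        (fun s hs => setIntegral_nonneg hΩ.measurableSet (hintegrand_nonneg s hs))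
        (hnn x hx) (hderiv x hx) hxt hs)
  filter_upwards [(hkc x).continuousAt.eventually (lt_mem_nhds (hkd x))] with y hky hy
  have hcont_time : ContinuousOn (u y) (Icc 0 t) := fun s hs =>
    (hderiv y (subset_closure hy) s hs.1).choose_spec.1.continuousWithinAt.mono
      Icc_subset_Ici_self
  refine Set.EqOn.of_subset_closure (f := u y) (g := fun _ => 0) (fun s hs => ?_) hcont_time
    continuousOn_const Ioo_subset_Icc_self (closure_Ioo ht.ne).ge ⟨ht.le, le_rfl⟩
  exact (mul_eq_zero.1 (hvanish s hs y hy)).resolve_left hky.ne'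

end Kernel

theorem stmt_18_general {n : ℕ} (Ω : Set (Pt n)) (hΩ : IsBoundedDomain Ω)
    (k : Pt n → Pt n → ℝ) (hk : IsDispersalKernel k)
    (d c₀ : ℝ) (hd : 0 < d)
    (u : Pt n → ℝ → ℝ)
    (hcont : ContinuousOn (fun q : Pt n × ℝ => u q.1 q.2) (closure Ω ×ˢ Set.Ici 0))
    (hnn : ∀ x ∈ closure Ω, ∀ t : ℝ, 0 ≤ t → 0 ≤ u x t)
    (hderiv : ∀ x ∈ closure Ω, ∀ t : ℝ, 0 ≤ t →
      ∃ u' : ℝ, HasDerivWithinAt (u x) u' (Set.Ici 0) t ∧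
        d * (∫ y in Ω, k x y * u y t) - c₀ * u x t ≤ u')
    (hne : ¬ ∀ x ∈ closure Ω, u x 0 = 0) :
    ∀ x ∈ closure Ω, ∀ t : ℝ, 0 < t → 0 < u x t := by
  obtain ⟨hΩo, hΩconn, hΩb⟩ := hΩ
  obtain ⟨hkc, hknn, hkd, -, -⟩ := hk
  have hslice : ∀ t, 0 ≤ t → ContinuousOn (fun y => u y t) (closure Ω) := fun t ht =>
    hcont.comp (continuous_id.prodMk continuous_const).continuousOn fun y hy => ⟨hy, ht⟩
  have hspread {x : Pt n} (hx : x ∈ closure Ω) {t : ℝ} (ht : 0 < t) (hxt : u x t = 0) :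
      ∀ᶠ y in 𝓝 x, y ∈ Ω → u y t = 0 :=
    eventually_eq_zero_of_eq_zero hΩo hΩb.isCompact_closure
      (fun x => hkc.comp (.prodMk_right x)) hknn hkd hd hslice hnn hderiv hx ht hxt
  have hI : ∀ x t, 0 ≤ t → 0 ≤ ∫ y in Ω, k x y * u y t := fun x t ht =>
    setIntegral_nonneg hΩo.measurableSet fun y hy =>
      mul_nonneg (hknn x y) (hnn y (subset_closure hy) t ht)
  intro x hx t ht
  refine (hnn x hx t ht.le).lt_of_ne fun hxt => hne ?_
  obtain ⟨y, hyt, hyΩ⟩ := ((hspread hx ht hxt.symm).and_frequently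
    (mem_closure_iff_frequently.1 hx)).exists
  have hzero_t : EqOn (fun z => u z t) (fun _ => 0) Ω :=
    hΩconn.isPreconnected.eqOn_const_of_eventuallyEq hΩo ((hslice t ht.le).mono subset_closure)
      (fun z hz hzt => by
        filter_upwards [hspread (subset_closure hz) ht hzt, hΩo.mem_nhds hz] with w hw hwΩ
        exact hw hwΩ)
      hyΩ (hyt hyΩ)
  have hzero_0 : EqOn (fun z => u z 0) (fun _ => 0) Ω := fun z hz =>
    eq_zero_of_le_deriv_of_eq_zero hd.le (hI z) (hnn z (subset_closure hz))
      (hderiv z (subset_closure hz)) le_rfl ht.le (hzero_t hz)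
  exact hzero_0.of_subset_closure (hslice 0 le_rfl) continuousOn_const subset_closure subset_rfl

theorem stmt_18 {n : ℕ} (Ω : Set (Pt n)) (hΩ : IsBoundedDomain Ω)
    (k : Pt n → Pt n → ℝ) (hk : IsDispersalKernel k)
    (d c₀ : ℝ) (hd : 0 < d) (hc₀ : 0 ≤ c₀)
    (u : Pt n → ℝ → ℝ)
    (hcont : ContinuousOn (fun q : Pt n × ℝ => u q.1 q.2) (closure Ω ×ˢ Set.Ici 0))
    (hnn : ∀ x ∈ closure Ω, ∀ t : ℝ, 0 ≤ t → 0 ≤ u x t)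
    (hderiv : ∀ x ∈ closure Ω, ∀ t : ℝ, 0 ≤ t →
      ∃ u' : ℝ, HasDerivWithinAt (u x) u' (Set.Ici 0) t ∧
        d * (∫ y in Ω, k x y * u y t) - c₀ * u x t ≤ u')
    (hne : ¬ ∀ x ∈ closure Ω, u x 0 = 0) :
    ∀ x ∈ closure Ω, ∀ t : ℝ, 0 < t → 0 < u x t :=
  stmt_18_general Ω hΩ k hk d c₀ hd u hcont hnn hderiv hne
end
end
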